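/- arXiv:1012.5842 — 5 statements merged into one kernel-verified Lean document; each statement's English description precedes it below -/
import Mathlib

section
/- For every μ ∈ Θ₀ and every finite sequence λ⁰, ..., λᵏ ∈ D, the iterate Φ(μ, λ⁰...λᵏ) has its last four coordinates in D and its first coordinate in B; in particular every iterate lies in B × D ⊆ B^5. -/
open Filter

/-- unit vector in `Fin 4 → Bool` -/
def unit4 (i : Fin 4) : Fin 4 → Bool := fun j => decide (j = i)

/-- the zero input value -/
def zero4 : Fin 4 → Bool := fun _ => false

/-- `D` : zero or a unit vector -/
def Dset : Set (Fin 4 → Bool) := {l | l = zero4 ∨ ∃ i, l = unit4 i}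

/-- the set of initial states `Θ₀` -/
def Theta0 : Set (Fin 5 → Bool) :=
  {fun _ => false, fun j => decide (j = (0 : Fin 5))}

/-- the admissible input set `U` -/
def Uset : Set (ℝ → (Fin 4 → Bool)) :=
  {u | (∃ k : ℕ, ∃ t : ℕ → ℝ, (∀ a b : ℕ, a < b → b ≤ 2 * k → t a < t b) ∧
        ∃ lam : ℕ → (Fin 4 → Bool), (∀ j : ℕ, j ≤ k → lam j ∈ Dset) ∧
          ∀ (s : ℝ) (i : Fin 4), u s i = true ↔
            ∃ j : ℕ, j ≤ k ∧ lam j i = true ∧ t (2 * j) ≤ s ∧ (j < k → s < t (2 * j + 1)))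
    ∨ (∃ t : ℕ → ℝ, StrictMono t ∧ Tendsto t atTop atTop ∧
        ∃ lam : ℕ → (Fin 4 → Bool), (∀ j : ℕ, lam j ∈ Dset) ∧
          ∀ (s : ℝ) (i : Fin 4), u s i = true ↔
            ∃ j : ℕ, lam j i = true ∧ t (2 * j) ≤ s ∧ s < t (2 * j + 1))}

/-- `v` is the left limit of `x` at `t` -/
def IsLeftLim {α : Type*} (x : ℝ → α) (t : ℝ) (v : α) : Prop :=
  ∃ ε > (0 : ℝ), ∀ s : ℝ, t - ε < s → s < t → x s = v

/-- the transition function `Φ` (inputs 0-indexed: `l 0` = λ₁, …, `l 3` = λ₄) -/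
def Phi (m : Fin 5 → Bool) (l : Fin 4 → Bool) : Fin 5 → Bool :=
  ![ (!m 0 && (l 1 || l 3)) || (m 0 && !l 0 && !l 2),
     !m 0 && (l 0 || l 1),
     m 0 && (l 1 || l 2),
     !m 0 && (l 2 || l 3),
     m 0 && (l 3 || l 0) ]

/-- the inverse transition function `Φ⁻¹` -/
def PhiInv (n : Fin 5 → Bool) (d : Fin 4 → Bool) : Fin 5 → Bool :=
  ![ (!n 0 && (d 1 || d 3)) || (n 0 && !d 0 && !d 2),
     !n 0 && (d 3 || d 0),
     n 0 && (d 0 || d 1),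
     !n 0 && (d 1 || d 2),
     n 0 && (d 2 || d 3) ]

/-- one step of the equations of the ideal RE: previous state `xp`,
previous input `up`, current input `u`. -/
def REstep (xp : Fin 5 → Bool) (up u : Fin 4 → Bool) : Fin 5 → Bool :=
  ![ (!xp 0 && (u 1 || u 3)) || (xp 0 && !u 0 && !u 2),
     (!xp 1 && !xp 0 && ((!up 0 && u 0) || (!up 1 && u 1))) ||
       (xp 1 && (xp 0 || !up 0 || u 0) && (!xp 0 || !up 1 || u 1)),
     (!xp 2 && xp 0 && ((!up 1 && u 1) || (!up 2 && u 2))) ||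
       (xp 2 && (!xp 0 || !up 1 || u 1) && (xp 0 || !up 2 || u 2)),
     (!xp 3 && !xp 0 && ((!up 2 && u 2) || (!up 3 && u 3))) ||
       (xp 3 && (xp 0 || !up 2 || u 2) && (!xp 0 || !up 3 || u 3)),
     (!xp 4 && xp 0 && ((!up 3 && u 3) || (!up 0 && u 0))) ||
       (xp 4 && (!xp 0 || !up 3 || u 3) && (xp 0 || !up 0 || u 0)) ]

/-- `x` is a signal: piecewise constant on a strictly increasing
unbounded sequence of switching times. -/
def IsSignal {α : Type*} (x : ℝ → α) : Prop :=
  ∃ t : ℕ → ℝ, StrictMono t ∧ Tendsto t atTop atTop ∧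
    (∀ s s' : ℝ, s < t 0 → s' < t 0 → x s = x s') ∧
    ∀ (k : ℕ) (s : ℝ), t k ≤ s → s < t (k + 1) → x s = x (t k)

/-- `x` is the solution of the equations of the ideal RE with
input `u` and initial state `μ`. -/
def Solves (u : ℝ → (Fin 4 → Bool)) (μ : Fin 5 → Bool)
    (x : ℝ → (Fin 5 → Bool)) : Prop :=
  IsSignal x ∧ (∃ t0 : ℝ, ∀ s < t0, x s = μ) ∧
  ∀ (t : ℝ) (xp : Fin 5 → Bool) (up : Fin 4 → Bool),
    IsLeftLim x t xp → IsLeftLim u t up → x t = REstep xp up (u t)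


lemma phi_tail_mem (m : Fin 5 → Bool) (l : Fin 4 → Bool) (hl : l ∈ Dset) :
    (fun i : Fin 4 => Phi m l i.succ) ∈ Dset := by
  rcases hl with h | ⟨i, h⟩ <;> subst h
  · left; funext j; fin_cases j <;> simp [Phi, zero4]
  · cases hm : m 0
    · fin_cases i
      · right; exact ⟨0, by funext j; fin_cases j <;> simp [Phi, unit4, hm]⟩
      · right; exact ⟨0, by funext j; fin_cases j <;> simp [Phi, unit4, hm]⟩
      · right; exact ⟨2, by funext j; fin_cases j <;> simp [Phi, unit4, hm]⟩
      · right; exact ⟨2, by funext j; fin_cases j <;> simp [Phi, unit4, hm]⟩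
    · fin_cases i
      · right; exact ⟨3, by funext j; fin_cases j <;> simp [Phi, unit4, hm]⟩
      · right; exact ⟨1, by funext j; fin_cases j <;> simp [Phi, unit4, hm]⟩
      · right; exact ⟨1, by funext j; fin_cases j <;> simp [Phi, unit4, hm]⟩
      · right; exact ⟨3, by funext j; fin_cases j <;> simp [Phi, unit4, hm]⟩

theorem stmt5 (μ : Fin 5 → Bool) (hμ : μ ∈ Theta0)
    (L : List (Fin 4 → Bool)) (hL : ∀ l ∈ L, l ∈ Dset) :
    (fun i : Fin 4 => (L.foldl Phi μ) i.succ) ∈ Dset := by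
  induction L using List.reverseRecOn with
  | nil =>
    rcases hμ with h | h <;> subst h <;> left <;> funext j <;> fin_cases j <;>
      simp [zero4] <;> decide
  | append_singleton L' l ih =>
    rw [List.foldl_append, List.foldl_cons, List.foldl_nil]
    exact phi_tail_mem _ _ (hL l (by simp))
end

section
/- The inverse transition function Φ⁻¹ undoes Φ on a rotated encoding: for all μ ∈ Θ₀ and λ ∈ D, writing Φ(μ,λ) = (ν₀, ν₁, ν₂, ν₃, ν₄), one has Φ⁻¹((ν₀,0,0,0,0), (ν₁,ν₂,ν₃,ν₄)) first coordinate equal to μ₀ whenever λ ≠ (0,0,0,0); i.e., the state coordinate of the rotary element is recoverable from the outputs. -/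
open Filter

theorem stmt12 (μ : Fin 5 → Bool) (hμ : μ ∈ Theta0)
    (l : Fin 4 → Bool) (hl : l ∈ Dset) (hl0 : l ≠ zero4) :
    PhiInv (fun j : Fin 5 => if j = 0 then Phi μ l 0 else false)
      (fun i : Fin 4 => Phi μ l i.succ) 0 = μ 0 := by
  rcases hl with h | ⟨i, rfl⟩
  · exact absurd h hl0
  rcases hμ with h | h <;> subst h <;> fin_cases i <;>
    simp [Phi, PhiInv, unit4, Fin.isValue] <;> decide
end

section
/- Injectivity in the input for the deterministic system: for every μ ∈ Θ₀ and all u, u' ∈ U, if u ≠ u' then f_μ(u) ≠ f_μ(u'). -/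
open Filter

/-- the two gap ("between pulses") states -/
def mz : Fin 5 → Bool := fun _ => false
def me : Fin 5 → Bool := fun j => decide (j = (0 : Fin 5))

/-- in-pulse state when pulse `i` started from gap state `mz` -/
def pA : Fin 4 → (Fin 5 → Bool) :=
  ![ ![false, true,  false, false, false],
     ![true,  true,  false, false, false],
     ![false, false, false, true,  false],
     ![true,  false, false, true,  false] ]

/-- in-pulse state when pulse `i` started from gap state `me` -/
def pB : Fin 4 → (Fin 5 → Bool) :=
  ![ ![false, false, false, false, true ],
     ![true,  false, true,  false, false],
     ![false, false, true,  false, false],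
     ![true,  false, false, false, true ] ]

/-- the invariant: admissible (state, current input) pairs -/
def W (m : Fin 5 → Bool) (l : Fin 4 → Bool) : Prop :=
  (l = zero4 ∧ (m = mz ∨ m = me)) ∨
  (∃ i : Fin 4, l = unit4 i ∧ (m = pA i ∨ m = pB i))

instance : DecidablePred (· ∈ Dset) := fun l =>
  decidable_of_iff (l = zero4 ∨ ∃ i, l = unit4 i) Iff.rfl

instance (m l) : Decidable (W m l) := by unfold W; infer_instance


lemma W_closure (m : Fin 5 → Bool) (l l' : Fin 4 → Bool)
    (hW : W m l) (htr : l = zero4 ∨ l' = l ∨ l' = zero4) (hD : l' ∈ Dset) :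
    W (REstep m l l') l' := by
  rcases hW with ⟨hl, hm | hm⟩ | ⟨i, hl, hm | hm⟩ <;>
  rcases hD with hl' | ⟨i', hl'⟩ <;>
  (try fin_cases i) <;> (try fin_cases i') <;>
  subst hl hl' hm <;> revert htr <;> decide

lemma W_inj (m : Fin 5 → Bool) (l a b : Fin 4 → Bool)
    (hW : W m l)
    (ha : l = zero4 ∨ a = l ∨ a = zero4) (hb : l = zero4 ∨ b = l ∨ b = zero4)
    (haD : a ∈ Dset) (hbD : b ∈ Dset)
    (heq : REstep m l a = REstep m l b) : a = b := by
  rcases hW with ⟨hl, hm | hm⟩ | ⟨i, hl, hm | hm⟩ <;>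
  rcases haD with ha' | ⟨ia, ha'⟩ <;>
  rcases hbD with hb' | ⟨ib, hb'⟩ <;>
  (try fin_cases i) <;> (try fin_cases ia) <;> (try fin_cases ib) <;>
  subst hl hm ha' hb' <;> revert ha hb heq <;> decide

/-! ### Real induction -/

lemma real_induction (P : ℝ → Prop)
    (h0 : ∃ t0 : ℝ, ∀ s < t0, P s)
    (hc : ∀ s, (∀ y < s, P y) → P s)
    (ho : ∀ s, (∀ y ≤ s, P y) → ∃ δ > 0, ∀ y < s + δ, P y) :
    ∀ s, P s := by
  by_contra h
  push_neg at h
  obtain ⟨z, hz⟩ := h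
  obtain ⟨t0, ht0⟩ := h0
  set S : Set ℝ := {s | ∀ y < s, P y} with hS
  have hne : S.Nonempty := ⟨t0, fun y hy => ht0 y hy⟩
  have hbdd : ∀ s ∈ S, s ≤ z := by
    intro s hs
    by_contra hzs
    push_neg at hzs
    exact hz (hs z hzs)
  set c := sSup S with hc'
  have hcS : ∀ y < c, P y := by
    intro y hy
    obtain ⟨s, hsS, hys⟩ := exists_lt_of_lt_csSup hne hy
    exact hsS y hys
  have hPle : ∀ y ≤ c, P y := by
    intro y hy
    rcases eq_or_lt_of_le hy with rfl | hy
    · exact hc _ hcS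
    · exact hcS y hy
  obtain ⟨δ, hδ, hδP⟩ := ho c hPle
  have hmem : c + δ ∈ S := fun y hy => hδP y hy
  have : c + δ ≤ c := le_csSup ⟨z, fun s hs => hbdd s hs⟩ hmem
  linarith

/-! ### window lemmas -/

lemma window_left (t : ℕ → ℝ) (N : ℕ) (T : ℝ) :
    ∃ ε > (0:ℝ), ∀ m < N, t m < T → t m ≤ T - ε := by
  induction N with
  | zero => exact ⟨1, one_pos, fun m hm => absurd hm (Nat.not_lt_zero m)⟩
  | succ n ih =>
    obtain ⟨ε, hε, hP⟩ := ih
    by_cases h : t n < T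
    · refine ⟨min ε (T - t n), lt_min hε (by linarith), ?_⟩
      intro m hm hmT
      rcases Nat.lt_succ_iff_lt_or_eq.mp hm with hm | rfl
      · have := hP m hm hmT
        have := min_le_left ε (T - t n)
        linarith
      · have := min_le_right ε (T - t m)
        linarith
    · refine ⟨ε, hε, ?_⟩
      intro m hm hmT
      rcases Nat.lt_succ_iff_lt_or_eq.mp hm with hm | rfl
      · exact hP m hm hmT
      · exact absurd hmT h

lemma window_right (t : ℕ → ℝ) (N : ℕ) (T : ℝ) :
    ∃ ε > (0:ℝ), ∀ m < N, T < t m → T + ε ≤ t m := by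
  induction N with
  | zero => exact ⟨1, one_pos, fun m hm => absurd hm (Nat.not_lt_zero m)⟩
  | succ n ih =>
    obtain ⟨ε, hε, hP⟩ := ih
    by_cases h : T < t n
    · refine ⟨min ε (t n - T), lt_min hε (by linarith), ?_⟩
      intro m hm hmT
      rcases Nat.lt_succ_iff_lt_or_eq.mp hm with hm | rfl
      · have := hP m hm hmT
        have := min_le_left ε (t n - T)
        linarith
      · have := min_le_right ε (t m - T)
        linarith
    · refine ⟨ε, hε, ?_⟩
      intro m hm hmT
      rcases Nat.lt_succ_iff_lt_or_eq.mp hm with hm | rfl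
      · exact hP m hm hmT
      · exact absurd hmT h

/-- a uniform "local description" of admissible inputs -/
def UNorm (u : ℝ → (Fin 4 → Bool)) : Prop :=
  ∃ (Act : ℕ → ℝ → Prop) (lam : ℕ → (Fin 4 → Bool)),
    (∀ s i, u s i = true ↔ ∃ j, Act j s ∧ lam j i = true) ∧
    (∀ j, lam j ∈ Dset) ∧
    (∀ j j' s, Act j s → Act j' s → j = j') ∧
    (∀ T : ℝ, ∃ ε > (0:ℝ),
      (∀ j (s s' : ℝ), T - ε < s → s < T → T - ε < s' → s' < T → (Act j s ↔ Act j s')) ∧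
      (∀ j (s : ℝ), T ≤ s → s < T + ε → (Act j s ↔ Act j T))) ∧
    (∀ (T : ℝ) j j' (ε : ℝ), 0 < ε → Act j T →
        (∀ s, T - ε < s → s < T → Act j' s) → j = j') ∧
    (∃ t0 : ℝ, ∀ s < t0, ∀ j, ¬ Act j s)

lemma Uset_norm {u : ℝ → (Fin 4 → Bool)} (hu : u ∈ Uset) : UNorm u := by
  rcases hu with ⟨k, t, hmono, lam, hlam, hiff⟩ | ⟨t, hmono, htend, lam, hlam, hiff⟩
  · -- finite case
    refine ⟨fun j s => j ≤ k ∧ t (2*j) ≤ s ∧ (j < k → s < t (2*j+1)),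
      fun j => if j ≤ k then lam j else zero4, ?_, ?_, ?_, ?_, ?_, ?_⟩
    · intro s i
      rw [hiff s i]
      constructor
      · rintro ⟨j, hk, hl, h1, h2⟩
        exact ⟨j, ⟨hk, h1, h2⟩, by simpa [if_pos hk] using hl⟩
      · rintro ⟨j, ⟨hk, h1, h2⟩, hl⟩
        exact ⟨j, hk, by simpa [if_pos hk] using hl, h1, h2⟩
    · intro j
      by_cases hk : j ≤ k
      · simpa [if_pos hk] using hlam j hk
      · simp only [if_neg hk]
        exact Or.inl rfl
    · intro j j' s hj hj'
      have key : ∀ a b : ℕ, a < b →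
          (a ≤ k ∧ t (2*a) ≤ s ∧ (a < k → s < t (2*a+1))) →
          (b ≤ k ∧ t (2*b) ≤ s ∧ (b < k → s < t (2*b+1))) → False := by
        rintro a b hab ⟨hak, ha1, ha2⟩ ⟨hbk, hb1, hb2⟩
        have h2' := ha2 (lt_of_lt_of_le hab hbk)
        have := hmono (2*a+1) (2*b) (by omega) (by omega)
        linarith
      rcases lt_trichotomy j j' with h | h | h
      · exact (key _ _ h hj hj').elim
      · exact h
      · exact ((key _ _ h hj' hj).elim)
    · intro T
      obtain ⟨εL, hεL, hL⟩ := window_left t (2*k+2) T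
      obtain ⟨εR, hεR, hR⟩ := window_right t (2*k+2) T
      refine ⟨min εL εR, lt_min hεL hεR, ?_, ?_⟩
      · have key : ∀ s : ℝ, T - min εL εR < s → s < T → ∀ j,
            ((j ≤ k ∧ t (2*j) ≤ s ∧ (j < k → s < t (2*j+1))) ↔
             (j ≤ k ∧ t (2*j) < T ∧ (j < k → T ≤ t (2*j+1)))) := by
          intro s hs1 hs2 j
          constructor
          · rintro ⟨hk, h1, h2⟩
            refine ⟨hk, lt_of_le_of_lt h1 hs2, fun hjk => ?_⟩
            by_contra hT
            push_neg at hT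
            have := hL (2*j+1) (by omega) hT
            have h2' := h2 hjk
            have := min_le_left εL εR
            linarith
          · rintro ⟨hk, h1, h2⟩
            refine ⟨hk, ?_, fun hjk => lt_of_lt_of_le hs2 (h2 hjk)⟩
            have := hL (2*j) (by omega) h1
            have := min_le_left εL εR
            linarith
        intro j s s' h1 h2 h3 h4
        exact (key s h1 h2 j).trans (key s' h3 h4 j).symm
      · intro j s hs1 hs2
        constructor
        · rintro ⟨hk, h1, h2⟩
          refine ⟨hk, ?_, fun hjk => lt_of_le_of_lt hs1 (h2 hjk)⟩
          by_contra hT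
          push_neg at hT
          have := hR (2*j) (by omega) hT
          have := min_le_right εL εR
          linarith
        · rintro ⟨hk, h1, h2⟩
          refine ⟨hk, le_trans h1 hs1, fun hjk => ?_⟩
          have h2' := h2 hjk
          have := hR (2*j+1) (by omega) h2'
          have := min_le_right εL εR
          linarith
    · intro T j j' ε hε hActT hActs
      obtain ⟨hj'k, h1', h2'⟩ := hActs (T - ε/2) (by linarith) (by linarith)
      obtain ⟨hjk, h1, h2⟩ := hActT
      have hclaim : j' < k → T ≤ t (2*j'+1) := by
        intro hj'
        by_contra hT
        push_neg at hT
        have hmax : max (T - ε) (t (2*j'+1)) < T := max_lt (by linarith) hT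
        obtain ⟨_, hs3, hs4⟩ := hActs ((max (T - ε) (t (2*j'+1)) + T)/2)
          (by linarith [le_max_left (T-ε) (t (2*j'+1))]) (by linarith)
        have := hs4 hj'
        linarith [le_max_right (T - ε) (t (2*j'+1))]
      rcases lt_trichotomy j j' with h | h | h
      · have hjlt : j < k := lt_of_lt_of_le h hj'k
        have hTlt := h2 hjlt
        have := hmono (2*j+1) (2*j') (by omega) (by omega)
        linarith
      · exact h
      · have hj'lt : j' < k := lt_of_lt_of_le h hjk
        have := hclaim hj'lt
        have := hmono (2*j'+1) (2*j) (by omega) (by omega)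
        linarith
    · refine ⟨t 0, fun s hs j hj => ?_⟩
      obtain ⟨hjk, h1, _⟩ := hj
      rcases Nat.eq_zero_or_pos j with rfl | hpos
      · norm_num at h1
        linarith
      · have := hmono 0 (2*j) (by omega) (by omega)
        linarith
  · -- infinite case
    refine ⟨fun j s => t (2*j) ≤ s ∧ s < t (2*j+1), lam, ?_, hlam, ?_, ?_, ?_, ?_⟩
    · intro s i
      rw [hiff s i]
      constructor
      · rintro ⟨j, hl, h1, h2⟩
        exact ⟨j, ⟨h1, h2⟩, hl⟩
      · rintro ⟨j, ⟨h1, h2⟩, hl⟩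
        exact ⟨j, hl, h1, h2⟩
    · intro j j' s hj hj'
      have key : ∀ a b : ℕ, a < b →
          (t (2*a) ≤ s ∧ s < t (2*a+1)) → (t (2*b) ≤ s ∧ s < t (2*b+1)) → False := by
        rintro a b hab ⟨ha1, ha2⟩ ⟨hb1, hb2⟩
        have := hmono (show 2*a+1 < 2*b by omega)
        linarith
      rcases lt_trichotomy j j' with h | h | h
      · exact (key _ _ h hj hj').elim
      · exact h
      · exact (key _ _ h hj' hj).elim
    · intro T
      obtain ⟨N, hN⟩ := Filter.eventually_atTop.mp (htend.eventually_ge_atTop (T+1))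
      obtain ⟨εL, hεL, hL⟩ := window_left t N T
      obtain ⟨εR, hεR, hR⟩ := window_right t N T
      refine ⟨min (min εL εR) 1, lt_min (lt_min hεL hεR) one_pos, ?_, ?_⟩
      · have key : ∀ s : ℝ, T - min (min εL εR) 1 < s → s < T → ∀ j,
            ((t (2*j) ≤ s ∧ s < t (2*j+1)) ↔ (t (2*j) < T ∧ T ≤ t (2*j+1))) := by
          intro s hs1 hs2 j
          constructor
          · rintro ⟨h1, h2⟩
            refine ⟨lt_of_le_of_lt h1 hs2, ?_⟩
            by_contra hT
            push_neg at hT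
            by_cases hn : 2*j+1 < N
            · have := hL _ hn hT
              have := min_le_left εL εR
              have := min_le_left (min εL εR) 1
              linarith
            · have := hN _ (le_of_not_gt hn)
              linarith
          · rintro ⟨h1, h2⟩
            refine ⟨?_, by linarith⟩
            by_cases hn : 2*j < N
            · have := hL _ hn h1
              have := min_le_left εL εR
              have := min_le_left (min εL εR) 1
              linarith
            · have := hN _ (le_of_not_gt hn)
              linarith
        intro j s s' h1 h2 h3 h4
        exact (key s h1 h2 j).trans (key s' h3 h4 j).symm
      · intro j s hs1 hs2
        constructor
        · rintro ⟨h1, h2⟩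
          constructor
          · by_contra hT
            push_neg at hT
            by_cases hn : 2*j < N
            · have := hR _ hn hT
              have := min_le_right εL εR
              have := min_le_left (min εL εR) 1
              linarith
            · have := hN _ (le_of_not_gt hn)
              have := min_le_right (min εL εR) 1
              linarith
          · linarith
        · rintro ⟨h1, h2⟩
          refine ⟨le_trans h1 hs1, ?_⟩
          by_cases hn : 2*j+1 < N
          · have := hR _ hn h2
            have := min_le_right εL εR
            have := min_le_left (min εL εR) 1
            linarith
          · have := hN _ (le_of_not_gt hn)
            have := min_le_right (min εL εR) 1
            linarith
    · intro T j j' ε hε hActT hActs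
      obtain ⟨h1', h2'⟩ := hActs (T - ε/2) (by linarith) (by linarith)
      obtain ⟨h1, h2⟩ := hActT
      have hclaim : T ≤ t (2*j'+1) := by
        by_contra hT
        push_neg at hT
        have hmax : max (T - ε) (t (2*j'+1)) < T := max_lt (by linarith) hT
        obtain ⟨hs3, hs4⟩ := hActs ((max (T - ε) (t (2*j'+1)) + T)/2)
          (by linarith [le_max_left (T-ε) (t (2*j'+1))]) (by linarith)
        linarith [le_max_right (T - ε) (t (2*j'+1))]
      rcases lt_trichotomy j j' with h | h | h
      · have := hmono (show 2*j+1 < 2*j' by omega)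
        linarith
      · exact h
      · have := hmono (show 2*j'+1 < 2*j by omega)
        linarith
    · refine ⟨t 0, fun s hs j hj => ?_⟩
      obtain ⟨h1, _⟩ := hj
      have := hmono.monotone (Nat.zero_le (2*j))
      linarith

lemma bool_eq_of_iff {a b : Bool} (h : a = true ↔ b = true) : a = b := by
  cases a <;> cases b <;> simp_all

/-! ### consequences of `UNorm` -/

variable {u : ℝ → (Fin 4 → Bool)}

lemma unorm_mem (hU : UNorm u) (s : ℝ) : u s ∈ Dset := by
  obtain ⟨Act, lam, hiff, hD, hdisj, -, -, -⟩ := hU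
  by_cases h : ∃ j, Act j s
  · obtain ⟨j, hj⟩ := h
    have huval : u s = lam j := by
      funext i
      apply bool_eq_of_iff
      constructor
      · intro hb
        obtain ⟨j', hj', hl⟩ := (hiff s i).mp hb
        exact (hdisj j' j s hj' hj) ▸ hl
      · intro hb
        exact (hiff s i).mpr ⟨j, hj, hb⟩
    rw [huval]
    exact hD j
  · left
    funext i
    show u s i = false
    by_contra hb
    rw [Bool.not_eq_false] at hb
    obtain ⟨j, hj, -⟩ := (hiff s i).mp hb
    exact h ⟨j, hj⟩

lemma unorm_leftlim (hU : UNorm u) (T : ℝ) :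
    ∃ up ε, 0 < ε ∧ ∀ s, T - ε < s → s < T → u s = up := by
  obtain ⟨Act, lam, hiff, hD, hdisj, hwin, -, -⟩ := hU
  obtain ⟨ε, hε, hLiff, -⟩ := hwin T
  refine ⟨u (T - ε/2), ε, hε, fun s h1 h2 => ?_⟩
  funext i
  apply bool_eq_of_iff
  rw [hiff, hiff]
  constructor
  · rintro ⟨j, hj, hl⟩
    exact ⟨j, (hLiff j s (T-ε/2) h1 h2 (by linarith) (by linarith)).mp hj, hl⟩
  · rintro ⟨j, hj, hl⟩
    exact ⟨j, (hLiff j s (T-ε/2) h1 h2 (by linarith) (by linarith)).mpr hj, hl⟩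

lemma unorm_rightconst (hU : UNorm u) (T : ℝ) :
    ∃ ε > (0:ℝ), ∀ s, T ≤ s → s < T + ε → u s = u T := by
  obtain ⟨Act, lam, hiff, hD, hdisj, hwin, -, -⟩ := hU
  obtain ⟨ε, hε, -, hRiff⟩ := hwin T
  refine ⟨ε, hε, fun s h1 h2 => ?_⟩
  funext i
  apply bool_eq_of_iff
  rw [hiff, hiff]
  constructor
  · rintro ⟨j, hj, hl⟩
    exact ⟨j, (hRiff j s h1 h2).mp hj, hl⟩
  · rintro ⟨j, hj, hl⟩
    exact ⟨j, (hRiff j s h1 h2).mpr hj, hl⟩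

lemma unorm_zero (hU : UNorm u) : ∃ t0 : ℝ, ∀ s < t0, u s = zero4 := by
  obtain ⟨Act, lam, hiff, -, -, -, -, t0, h0⟩ := hU
  refine ⟨t0, fun s hs => ?_⟩
  funext i
  show u s i = false
  by_contra hb
  rw [Bool.not_eq_false] at hb
  obtain ⟨j, hj, -⟩ := (hiff s i).mp hb
  exact h0 s hs j hj

lemma unorm_trans (hU : UNorm u) (T : ℝ) (up : Fin 4 → Bool)
    (hlim : IsLeftLim u T up) : up = zero4 ∨ u T = up ∨ u T = zero4 := by
  obtain ⟨Act, lam, hiff, hD, hdisj, hwin, hP5, -⟩ := hU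
  by_cases hT : u T = zero4
  · exact Or.inr (Or.inr hT)
  by_cases hup : up = zero4
  · exact Or.inl hup
  refine Or.inr (Or.inl ?_)
  have hTne : ∃ i, u T i = true := by
    by_contra hno
    push_neg at hno
    simp only [Bool.not_eq_true] at hno
    exact hT (funext fun i => hno i)
  obtain ⟨i₁, hi₁⟩ := hTne
  obtain ⟨j₁, hj₁, hl₁⟩ := (hiff T i₁).mp hi₁
  obtain ⟨ε₀, hε₀, hLiff, -⟩ := hwin T
  obtain ⟨ε₁, hε₁, hlim'⟩ := hlim
  have hε : 0 < min ε₀ ε₁ := lt_min hε₀ hε₁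
  have hm0 := min_le_left ε₀ ε₁
  have hm1 := min_le_right ε₀ ε₁
  set s₀ := T - min ε₀ ε₁ / 2 with hs₀
  have hups₀ : u s₀ = up := hlim' s₀ (by simp only [hs₀]; linarith) (by simp only [hs₀]; linarith)
  have hupne : ∃ i, up i = true := by
    by_contra hno
    push_neg at hno
    simp only [Bool.not_eq_true] at hno
    exact hup (funext fun i => hno i)
  obtain ⟨i₀, hi₀⟩ := hupne
  have hus₀ : u s₀ i₀ = true := by rw [hups₀]; exact hi₀
  obtain ⟨j₀, hj₀, hl₀⟩ := (hiff s₀ i₀).mp hus₀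
  have hActs : ∀ s, T - min ε₀ ε₁ < s → s < T → Act j₀ s := by
    intro s h1 h2
    exact (hLiff j₀ s s₀ (by linarith) h2 (by simp only [hs₀]; linarith)
      (by simp only [hs₀]; linarith)).mpr hj₀
  have hj10 : j₁ = j₀ := hP5 T j₁ j₀ (min ε₀ ε₁) hε hj₁ hActs
  have h1 : u T = lam j₁ := by
    funext i
    apply bool_eq_of_iff
    constructor
    · intro hb
      obtain ⟨j', hj', hl⟩ := (hiff T i).mp hb
      exact (hdisj j' j₁ T hj' hj₁) ▸ hl
    · intro hb
      exact (hiff T i).mpr ⟨j₁, hj₁, hb⟩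
  have h2 : u s₀ = lam j₀ := by
    funext i
    apply bool_eq_of_iff
    constructor
    · intro hb
      obtain ⟨j', hj', hl⟩ := (hiff s₀ i).mp hb
      exact (hdisj j' j₀ s₀ hj' hj₀) ▸ hl
    · intro hb
      exact (hiff s₀ i).mpr ⟨j₀, hj₀, hb⟩
  rw [h1, hj10, ← h2, hups₀]

/-! ### consequences of `IsSignal` -/

lemma signal_right {α : Type*} {x : ℝ → α} (h : IsSignal x) (T : ℝ) :
    ∃ δ > (0:ℝ), ∀ s, T ≤ s → s < T + δ → x s = x T := by
  classical
  obtain ⟨τ, hmono, htend, h0, hstep⟩ := h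
  have hex : ∃ k, T < τ k := by
    obtain ⟨K, hK⟩ := Filter.eventually_atTop.mp (htend.eventually_gt_atTop T)
    exact ⟨K, hK K le_rfl⟩
  have hfind := Nat.find_spec hex
  by_cases h0k : Nat.find hex = 0
  · have hT0 : T < τ 0 := h0k ▸ hfind
    exact ⟨τ 0 - T, by linarith, fun s hs1 hs2 => h0 s T (by linarith) hT0⟩
  · obtain ⟨k, hk⟩ := Nat.exists_eq_succ_of_ne_zero h0k
    have h1 : τ k ≤ T := le_of_not_gt (Nat.find_min hex (by omega))
    have h2 : T < τ (k+1) := by rw [← Nat.succ_eq_add_one, ← hk]; exact hfind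
    refine ⟨τ (k+1) - T, by linarith, fun s hs1 hs2 => ?_⟩
    rw [hstep k s (le_trans h1 hs1) (by linarith), hstep k T h1 h2]

lemma signal_left {α : Type*} {x : ℝ → α} (h : IsSignal x) (T : ℝ) :
    ∃ v ε, (0:ℝ) < ε ∧ ∀ s, T - ε < s → s < T → x s = v := by
  classical
  obtain ⟨τ, hmono, htend, h0, hstep⟩ := h
  have hex : ∃ k, T < τ k := by
    obtain ⟨K, hK⟩ := Filter.eventually_atTop.mp (htend.eventually_gt_atTop T)
    exact ⟨K, hK K le_rfl⟩
  have hfind := Nat.find_spec hex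
  by_cases h0k : Nat.find hex = 0
  · have hT0 : T < τ 0 := h0k ▸ hfind
    exact ⟨x (T-1), 1, one_pos, fun s hs1 hs2 => h0 s (T-1) (by linarith) (by linarith)⟩
  · obtain ⟨k, hk⟩ := Nat.exists_eq_succ_of_ne_zero h0k
    have h1 : τ k ≤ T := le_of_not_gt (Nat.find_min hex (by omega))
    have h2 : T < τ (k+1) := by rw [← Nat.succ_eq_add_one, ← hk]; exact hfind
    by_cases hlt : τ k < T
    · exact ⟨x (τ k), T - τ k, by linarith, fun s hs1 hs2 =>
        hstep k s (by linarith) (by linarith)⟩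
    · have heq : τ k = T := le_antisymm h1 (le_of_not_gt hlt)
      by_cases hk0 : k = 0
      · refine ⟨x (T-1), 1, one_pos, fun s hs1 hs2 => h0 s (T-1) ?_ ?_⟩
        · rw [hk0] at heq
          rw [heq]
          exact hs2
        · rw [hk0] at heq
          rw [heq]
          linarith
      · obtain ⟨k', hk'⟩ := Nat.exists_eq_succ_of_ne_zero hk0
        have hk'lt : τ k' < τ k := hmono (by omega)
        refine ⟨x (τ k'), T - τ k', by linarith, fun s hs1 hs2 => hstep k' s (by linarith) ?_⟩
        rw [← Nat.succ_eq_add_one, ← hk', heq]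
        exact hs2

/-! ### the invariant -/

theorem invariantW {u : ℝ → (Fin 4 → Bool)} {μ : Fin 5 → Bool} {x : ℝ → (Fin 5 → Bool)}
    (hU : UNorm u) (hμ : μ ∈ Theta0) (hx : Solves u μ x) :
    ∀ s, W (x s) (u s) := by
  obtain ⟨hsig, ⟨t0x, ht0x⟩, hstep⟩ := hx
  have hμW : W μ zero4 := by
    simp only [Theta0, Set.mem_insert_iff, Set.mem_singleton_iff] at hμ
    rcases hμ with rfl | rfl <;> decide
  obtain ⟨t0u, ht0u⟩ := unorm_zero hU
  refine real_induction (fun s => W (x s) (u s)) ?_ ?_ ?_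
  · refine ⟨min t0x t0u, fun s hs => ?_⟩
    show W (x s) (u s)
    rw [ht0x s (lt_of_lt_of_le hs (min_le_left _ _)),
        ht0u s (lt_of_lt_of_le hs (min_le_right _ _))]
    exact hμW
  · intro s IH
    show W (x s) (u s)
    obtain ⟨xp, ε₁, hε₁, hxl⟩ := signal_left hsig s
    obtain ⟨up, ε₂, hε₂, hul⟩ := unorm_leftlim hU s
    have hlimx : IsLeftLim x s xp := ⟨ε₁, hε₁, hxl⟩
    have hlimu : IsLeftLim u s up := ⟨ε₂, hε₂, hul⟩
    have heq := hstep s xp up hlimx hlimu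
    have hεm : 0 < min ε₁ ε₂ := lt_min hε₁ hε₂
    have hm1 := min_le_left ε₁ ε₂
    have hm2 := min_le_right ε₁ ε₂
    have h1 : xp = x (s - min ε₁ ε₂ / 2) := (hxl _ (by linarith) (by linarith)).symm
    have h2 : up = u (s - min ε₁ ε₂ / 2) := (hul _ (by linarith) (by linarith)).symm
    have hWp : W xp up := by
      rw [h1, h2]
      exact IH _ (by linarith)
    rw [heq]
    exact W_closure xp up (u s) hWp (unorm_trans hU s up hlimu) (unorm_mem hU s)
  · intro s IH
    obtain ⟨δ₁, hδ₁, hxr⟩ := signal_right hsig s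
    obtain ⟨δ₂, hδ₂, hur⟩ := unorm_rightconst hU s
    refine ⟨min δ₁ δ₂, lt_min hδ₁ hδ₂, fun y hy => ?_⟩
    show W (x y) (u y)
    rcases le_or_gt y s with h | h
    · exact IH y h
    · rw [hxr y h.le (by linarith [min_le_left δ₁ δ₂]),
          hur y h.le (by linarith [min_le_right δ₁ δ₂])]
      exact IH s le_rfl


theorem stmt17 (μ : Fin 5 → Bool) (hμ : μ ∈ Theta0)
    (u u' : ℝ → (Fin 4 → Bool)) (hu : u ∈ Uset) (hu' : u' ∈ Uset) (hne : u ≠ u')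
    (x x' : ℝ → (Fin 5 → Bool)) (hx : Solves u μ x) (hx' : Solves u' μ x') :
    x ≠ x' := by
  intro hxx
  subst hxx
  have hU := Uset_norm hu
  have hU' := Uset_norm hu'
  have hinv := invariantW hU hμ hx
  apply hne
  by_contra hne'
  have hA : ∃ s, u s ≠ u' s := by
    by_contra h
    push_neg at h
    exact hne' (funext h)
  set A := {s : ℝ | u s ≠ u' s} with hAdef
  have hAne : A.Nonempty := hA
  obtain ⟨t0u, ht0u⟩ := unorm_zero hU
  obtain ⟨t0u', ht0u'⟩ := unorm_zero hU'
  have hbdd : BddBelow A := by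
    refine ⟨min t0u t0u', fun s hs => ?_⟩
    by_contra h
    push_neg at h
    exact hs ((ht0u s (lt_of_lt_of_le h (min_le_left _ _))).trans
      (ht0u' s (lt_of_lt_of_le h (min_le_right _ _))).symm)
  set c := sInf A with hcdef
  have hlow : ∀ y, y < c → u y = u' y := by
    intro y hy
    by_contra h
    exact absurd (csInf_le hbdd h) (not_le.mpr hy)
  have hcA : u c ≠ u' c := by
    intro hceq
    obtain ⟨δ₁, hδ₁, hr⟩ := unorm_rightconst hU c
    obtain ⟨δ₂, hδ₂, hr'⟩ := unorm_rightconst hU' c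
    have hle : c + min δ₁ δ₂ ≤ c := by
      refine le_csInf hAne (fun y hy => ?_)
      by_contra h
      push_neg at h
      rcases le_or_gt c y with h2 | h2
      · exact hy ((hr y h2 (by linarith [min_le_left δ₁ δ₂])).trans
          (hceq.trans (hr' y h2 (by linarith [min_le_right δ₁ δ₂])).symm))
      · exact hy (hlow y h2)
    linarith [lt_min hδ₁ hδ₂]
  obtain ⟨xp, ε₁, hε₁, hxl⟩ := signal_left hx.1 c
  obtain ⟨up, ε₂, hε₂, hul⟩ := unorm_leftlim hU c
  obtain ⟨up', ε₃, hε₃, hul'⟩ := unorm_leftlim hU' c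
  have hεm : 0 < min ε₂ ε₃ := lt_min hε₂ hε₃
  have hupeq : up' = up := by
    have hm1 := min_le_left ε₂ ε₃
    have hm2 := min_le_right ε₂ ε₃
    have e1 : u' (c - min ε₂ ε₃ / 2) = up' := hul' _ (by linarith) (by linarith)
    have e2 : u (c - min ε₂ ε₃ / 2) = up := hul _ (by linarith) (by linarith)
    rw [← e1, ← e2]
    exact (hlow _ (by linarith)).symm
  have hlimx : IsLeftLim x c xp := ⟨ε₁, hε₁, hxl⟩
  have hlimu : IsLeftLim u c up := ⟨ε₂, hε₂, hul⟩
  have hlimu' : IsLeftLim u' c up := hupeq ▸ ⟨ε₃, hε₃, hul'⟩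
  have e1 := hx.2.2 c xp up hlimx hlimu
  have e2 := hx'.2.2 c xp up hlimx hlimu'
  have hWp : W xp up := by
    have hεn : 0 < min ε₁ ε₂ := lt_min hε₁ hε₂
    have hm1 := min_le_left ε₁ ε₂
    have hm2 := min_le_right ε₁ ε₂
    have h1 : xp = x (c - min ε₁ ε₂ / 2) := (hxl _ (by linarith) (by linarith)).symm
    have h2 : up = u (c - min ε₁ ε₂ / 2) := (hul _ (by linarith) (by linarith)).symm
    rw [h1, h2]
    exact hinv _
  exact hcA (W_inj xp up (u c) (u' c) hWp (unorm_trans hU c up hlimu)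
    (unorm_trans hU' c up hlimu') (unorm_mem hU c) (unorm_mem hU' c)
    (e1.symm.trans e2))
end

section
/- Disjointness of behaviors: for all u, u' ∈ U with u ≠ u', the sets f(u) = {f_μ(u) | μ ∈ Θ₀} and f(u') = {f_μ(u') | μ ∈ Θ₀} are disjoint: f(u) ∩ f(u') = ∅. -/
open Filter

/-- readout map recovering the input from the state -/
def Rmap (x : Fin 5 → Bool) : Fin 4 → Bool :=
  ![ !x 0 && (x 1 || x 4), x 0 && (x 1 || x 2), !x 0 && (x 2 || x 3), x 0 && (x 3 || x 4) ]

theorem keyStep : ∀ xp : Fin 5 → Bool, ∀ v : Fin 4 → Bool,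
    (Rmap xp = zero4 ∨ ∃ i, Rmap xp = unit4 i) →
    (v = zero4 ∨ ∃ i, v = unit4 i) →
    (Rmap xp = zero4 ∨ v = zero4 ∨ v = Rmap xp) →
    Rmap (REstep xp (Rmap xp) v) = v := by decide

theorem exists_piece_fin (t : ℕ → ℝ) (K : ℕ) (s : ℝ) (hs : t 0 ≤ s) (hsK : s < t K) :
    ∃ m, m < K ∧ t m ≤ s ∧ s < t (m + 1) := by
  classical
  have hP : ∃ N, s < t N := ⟨K, hsK⟩
  have h1 : s < t (Nat.find hP) := Nat.find_spec hP
  have hle : Nat.find hP ≤ K := Nat.find_min' hP hsK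
  have hne : Nat.find hP ≠ 0 := by
    intro h
    rw [h] at h1; linarith
  refine ⟨Nat.find hP - 1, by omega, ?_, ?_⟩
  · have h2 := Nat.find_min hP (m := Nat.find hP - 1) (by omega)
    push_neg at h2
    exact h2
  · have h3 : Nat.find hP - 1 + 1 = Nat.find hP := by omega
    rw [h3]; exact h1

theorem exists_pieceL_fin (t : ℕ → ℝ) (K : ℕ) (s : ℝ) (hs : t 0 < s) (hsK : s ≤ t K) :
    ∃ m, m < K ∧ t m < s ∧ s ≤ t (m + 1) := by
  classical
  have hP : ∃ N, s ≤ t N := ⟨K, hsK⟩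
  have h1 : s ≤ t (Nat.find hP) := Nat.find_spec hP
  have hle : Nat.find hP ≤ K := Nat.find_min' hP hsK
  have hne : Nat.find hP ≠ 0 := by
    intro h
    rw [h] at h1; linarith
  refine ⟨Nat.find hP - 1, by omega, ?_, ?_⟩
  · have h2 := Nat.find_min hP (m := Nat.find hP - 1) (by omega)
    push_neg at h2
    exact h2
  · have h3 : Nat.find hP - 1 + 1 = Nat.find hP := by omega
    rw [h3]; exact h1

/-- bundled structural facts about an admissible input -/
def GoodInput (u : ℝ → (Fin 4 → Bool)) : Prop :=
  (∃ c : ℝ, ∀ s, s < c → u s = zero4) ∧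
  (∀ s, u s = zero4 ∨ ∃ i, u s = unit4 i) ∧
  (∀ s, ∃ δ > (0:ℝ), ∀ r, s ≤ r → r < s + δ → u r = u s) ∧
  (∀ s, ∃ up, IsLeftLim u s up ∧ (up = zero4 ∨ u s = zero4 ∨ u s = up))

theorem good_of_mem (u : ℝ → (Fin 4 → Bool)) (hu : u ∈ Uset) : GoodInput u := by
  rcases hu with ⟨k, t, hmono, lam, hlam, hiff⟩ | ⟨t, hmono, htop, lam, hlam, hiff⟩
  · -- finite case
    have hle' : ∀ a b : ℕ, a ≤ b → b ≤ 2 * k → t a ≤ t b := by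
      intro a b h1 h2
      rcases eq_or_lt_of_le h1 with h | h
      · rw [h]
      · exact (hmono a b h h2).le
    have hzero : ∀ s, s < t 0 → u s = zero4 := by
      intro s hs
      funext i
      cases hus : u s i with
      | false => rfl
      | true =>
        obtain ⟨j, hjk, _, h1', _⟩ := (hiff s i).1 hus
        have := hle' 0 (2 * j) (by omega) (by omega)
        linarith
    have hpulse : ∀ j, j < k → ∀ s, t (2 * j) ≤ s → s < t (2 * j + 1) → u s = lam j := by
      intro j hjk s h1 h2
      funext i
      cases hl : lam j i with
      | true => exact (hiff s i).2 ⟨j, hjk.le, hl, h1, fun _ => h2⟩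
      | false =>
        cases hus : u s i with
        | false => rfl
        | true =>
          obtain ⟨j', hj'k, hl', h1', h2'⟩ := (hiff s i).1 hus
          by_cases hlt : j' < j
          · have hs' := h2' (lt_trans hlt hjk)
            have := hle' (2 * j' + 1) (2 * j) (by omega) (by omega)
            linarith
          by_cases hgt : j < j'
          · have := hle' (2 * j + 1) (2 * j') (by omega) (by omega)
            linarith
          have hjj : j' = j := by omega
          rw [hjj, hl] at hl'
          simp at hl'
    have hgap : ∀ j, j < k → ∀ s, t (2 * j + 1) ≤ s → s < t (2 * j + 2) → u s = zero4 := by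
      intro j hjk s h1 h2
      funext i
      cases hus : u s i with
      | false => rfl
      | true =>
        obtain ⟨j', hj'k, hl', h1', h2'⟩ := (hiff s i).1 hus
        by_cases hlt : j' ≤ j
        · have hs' := h2' (lt_of_le_of_lt hlt hjk)
          have := hle' (2 * j' + 1) (2 * j + 1) (by omega) (by omega)
          linarith
        · have := hle' (2 * j + 2) (2 * j') (by omega) (by omega)
          linarith
    have hlast : ∀ s, t (2 * k) ≤ s → u s = lam k := by
      intro s h1
      funext i
      cases hl : lam k i with
      | true => exact (hiff s i).2 ⟨k, le_refl k, hl, h1, fun hkk => absurd hkk (lt_irrefl k)⟩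
      | false =>
        cases hus : u s i with
        | false => rfl
        | true =>
          obtain ⟨j', hj'k, hl', h1', h2'⟩ := (hiff s i).1 hus
          by_cases hlt : j' < k
          · have hs' := h2' hlt
            have := hle' (2 * j' + 1) (2 * k) (by omega) (by omega)
            linarith
          · have hjj : j' = k := by omega
            rw [hjj, hl] at hl'
            simp at hl'
    refine ⟨⟨t 0, hzero⟩, ?_, ?_, ?_⟩
    · -- values in D
      intro s
      by_cases h0 : s < t 0
      · left; exact hzero s h0
      push_neg at h0
      by_cases hk : t (2 * k) ≤ s
      · rw [hlast s hk]; exact hlam k (le_refl k)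
      push_neg at hk
      obtain ⟨m, hmK, hm1, hm2⟩ := exists_piece_fin t (2 * k) s h0 hk
      rcases Nat.even_or_odd m with ⟨j, hj⟩ | ⟨j, hj⟩
      · have hmeq : 2 * j = m := by omega
        rw [← hmeq] at hm1 hm2 hmK
        rw [hpulse j (by omega) s hm1 hm2]
        exact hlam j (by omega)
      · have hmeq : 2 * j + 1 = m := by omega
        rw [← hmeq] at hm1 hm2 hmK
        left; exact hgap j (by omega) s hm1 hm2
    · -- right-local constancy
      intro s
      by_cases h0 : s < t 0
      · exact ⟨t 0 - s, by linarith, fun r hr1 hr2 =>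
          by rw [hzero r (by linarith), hzero s h0]⟩
      push_neg at h0
      by_cases hk : t (2 * k) ≤ s
      · exact ⟨1, one_pos, fun r hr1 hr2 =>
          by rw [hlast r (le_trans hk hr1), hlast s hk]⟩
      push_neg at hk
      obtain ⟨m, hmK, hm1, hm2⟩ := exists_piece_fin t (2 * k) s h0 hk
      refine ⟨t (m + 1) - s, by linarith, fun r hr1 hr2 => ?_⟩
      have hrm : t m ≤ r := le_trans hm1 hr1
      have hrm2 : r < t (m + 1) := by linarith
      rcases Nat.even_or_odd m with ⟨j, hj⟩ | ⟨j, hj⟩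
      · have hmeq : 2 * j = m := by omega
        rw [← hmeq] at hm1 hm2 hmK hrm hrm2
        rw [hpulse j (by omega) r hrm hrm2, hpulse j (by omega) s hm1 hm2]
      · have hmeq : 2 * j + 1 = m := by omega
        rw [← hmeq] at hm1 hm2 hmK hrm hrm2
        rw [hgap j (by omega) r hrm hrm2, hgap j (by omega) s hm1 hm2]
    · -- left limits
      intro s
      by_cases h0 : s ≤ t 0
      · exact ⟨zero4, ⟨1, one_pos, fun r hr1 hr2 => hzero r (lt_of_lt_of_le hr2 h0)⟩, .inl rfl⟩
      push_neg at h0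
      by_cases hk : t (2 * k) < s
      · exact ⟨lam k, ⟨s - t (2 * k), by linarith, fun r hr1 hr2 => hlast r (by linarith)⟩,
          .inr (.inr (hlast s hk.le))⟩
      push_neg at hk
      obtain ⟨m, hmK, hm1, hm2⟩ := exists_pieceL_fin t (2 * k) s h0 hk
      rcases Nat.even_or_odd m with ⟨j, hj⟩ | ⟨j, hj⟩
      · have hmeq : 2 * j = m := by omega
        rw [← hmeq] at hm1 hm2 hmK
        refine ⟨lam j, ⟨s - t (2 * j), by linarith,
          fun r hr1 hr2 => hpulse j (by omega) r (by linarith) (lt_of_lt_of_le hr2 hm2)⟩, ?_⟩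
        rcases lt_or_eq_of_le hm2 with h | h
        · exact .inr (.inr (hpulse j (by omega) s hm1.le h))
        · refine .inr (.inl (hgap j (by omega) s h.ge ?_))
          rw [h]
          exact hmono (2 * j + 1) (2 * j + 2) (by omega) (by omega)
      · have hmeq : 2 * j + 1 = m := by omega
        rw [← hmeq] at hm1 hm2 hmK
        exact ⟨zero4, ⟨s - t (2 * j + 1), by linarith,
          fun r hr1 hr2 => hgap j (by omega) r (by linarith) (lt_of_lt_of_le hr2 hm2)⟩, .inl rfl⟩
  · -- infinite case
    have hzero : ∀ s, s < t 0 → u s = zero4 := by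
      intro s hs
      funext i
      cases hus : u s i with
      | false => rfl
      | true =>
        obtain ⟨j, _, h1', _⟩ := (hiff s i).1 hus
        have := hmono.monotone (Nat.zero_le (2 * j))
        linarith
    have hpulse : ∀ j s, t (2 * j) ≤ s → s < t (2 * j + 1) → u s = lam j := by
      intro j s h1 h2
      funext i
      cases hl : lam j i with
      | true => exact (hiff s i).2 ⟨j, hl, h1, h2⟩
      | false =>
        cases hus : u s i with
        | false => rfl
        | true =>
          obtain ⟨j', hl', h1', h2'⟩ := (hiff s i).1 hus
          have e1 : 2 * j < 2 * j' + 1 := hmono.lt_iff_lt.mp (lt_of_le_of_lt h1 h2')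
          have e2 : 2 * j' < 2 * j + 1 := hmono.lt_iff_lt.mp (lt_of_le_of_lt h1' h2)
          have hjj : j' = j := by omega
          rw [hjj, hl] at hl'
          simp at hl'
    have hgap : ∀ j s, t (2 * j + 1) ≤ s → s < t (2 * j + 2) → u s = zero4 := by
      intro j s h1 h2
      funext i
      cases hus : u s i with
      | false => rfl
      | true =>
        obtain ⟨j', hl', h1', h2'⟩ := (hiff s i).1 hus
        have e1 : 2 * j + 1 < 2 * j' + 1 := hmono.lt_iff_lt.mp (lt_of_le_of_lt h1 h2')
        have e2 : 2 * j' < 2 * j + 2 := hmono.lt_iff_lt.mp (lt_of_le_of_lt h1' h2)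
        omega
    refine ⟨⟨t 0, hzero⟩, ?_, ?_, ?_⟩
    · intro s
      by_cases h0 : s < t 0
      · left; exact hzero s h0
      push_neg at h0
      obtain ⟨K, hK⟩ := (htop.eventually_gt_atTop s).exists
      obtain ⟨m, _, hm1, hm2⟩ := exists_piece_fin t K s h0 hK
      rcases Nat.even_or_odd m with ⟨j, hj⟩ | ⟨j, hj⟩
      · have hmeq : 2 * j = m := by omega
        rw [← hmeq] at hm1 hm2
        rw [hpulse j s hm1 hm2]
        exact hlam j
      · have hmeq : 2 * j + 1 = m := by omega
        rw [← hmeq] at hm1 hm2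
        left; exact hgap j s hm1 hm2
    · intro s
      by_cases h0 : s < t 0
      · exact ⟨t 0 - s, by linarith, fun r hr1 hr2 =>
          by rw [hzero r (by linarith), hzero s h0]⟩
      push_neg at h0
      obtain ⟨K, hK⟩ := (htop.eventually_gt_atTop s).exists
      obtain ⟨m, _, hm1, hm2⟩ := exists_piece_fin t K s h0 hK
      refine ⟨t (m + 1) - s, by linarith, fun r hr1 hr2 => ?_⟩
      have hrm : t m ≤ r := le_trans hm1 hr1
      have hrm2 : r < t (m + 1) := by linarith
      rcases Nat.even_or_odd m with ⟨j, hj⟩ | ⟨j, hj⟩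
      · have hmeq : 2 * j = m := by omega
        rw [← hmeq] at hm1 hm2 hrm hrm2
        rw [hpulse j r hrm hrm2, hpulse j s hm1 hm2]
      · have hmeq : 2 * j + 1 = m := by omega
        rw [← hmeq] at hm1 hm2 hrm hrm2
        rw [hgap j r hrm hrm2, hgap j s hm1 hm2]
    · intro s
      by_cases h0 : s ≤ t 0
      · exact ⟨zero4, ⟨1, one_pos, fun r hr1 hr2 => hzero r (lt_of_lt_of_le hr2 h0)⟩, .inl rfl⟩
      push_neg at h0
      obtain ⟨K, hK⟩ := (htop.eventually_ge_atTop s).exists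
      obtain ⟨m, _, hm1, hm2⟩ := exists_pieceL_fin t K s h0 hK
      rcases Nat.even_or_odd m with ⟨j, hj⟩ | ⟨j, hj⟩
      · have hmeq : 2 * j = m := by omega
        rw [← hmeq] at hm1 hm2
        refine ⟨lam j, ⟨s - t (2 * j), by linarith,
          fun r hr1 hr2 => hpulse j r (by linarith) (lt_of_lt_of_le hr2 hm2)⟩, ?_⟩
        rcases lt_or_eq_of_le hm2 with h | h
        · exact .inr (.inr (hpulse j s hm1.le h))
        · refine .inr (.inl (hgap j s h.ge ?_))
          rw [h]
          exact hmono (by omega)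
      · have hmeq : 2 * j + 1 = m := by omega
        rw [← hmeq] at hm1 hm2
        exact ⟨zero4, ⟨s - t (2 * j + 1), by linarith,
          fun r hr1 hr2 => hgap j r (by linarith) (lt_of_lt_of_le hr2 hm2)⟩, .inl rfl⟩

theorem recover (u : ℝ → (Fin 4 → Bool)) (μ : Fin 5 → Bool) (x : ℝ → (Fin 5 → Bool))
    (hg : GoodInput u) (hμ : μ ∈ Theta0) (hx : Solves u μ x) :
    ∀ s, u s = Rmap (x s) := by
  obtain ⟨⟨c, hc⟩, uD, uRC, uLL⟩ := hg
  obtain ⟨⟨tx, hxm, hxtop, hxpre, hxstep⟩, ⟨t0x, hinit⟩, hstep⟩ := hx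
  have xRC : ∀ s, ∃ δ > (0:ℝ), ∀ r, s ≤ r → r < s + δ → x r = x s := by
    intro s
    by_cases h0 : s < tx 0
    · exact ⟨tx 0 - s, by linarith, fun r h1 h2 => hxpre r s (by linarith) h0⟩
    · push_neg at h0
      obtain ⟨K, hK⟩ := (hxtop.eventually_gt_atTop s).exists
      obtain ⟨m, _, hm1, hm2⟩ := exists_piece_fin tx K s h0 hK
      exact ⟨tx (m + 1) - s, by linarith, fun r h1 h2 =>
        (hxstep m r (le_trans hm1 h1) (by linarith)).trans (hxstep m s hm1 hm2).symm⟩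
  have xLL : ∀ s, ∃ xp, IsLeftLim x s xp := by
    intro s
    by_cases h0 : s ≤ tx 0
    · exact ⟨x (s - 1), 1, one_pos, fun r h1 h2 => hxpre r (s - 1) (by linarith) (by linarith)⟩
    · push_neg at h0
      obtain ⟨K, hK⟩ := (hxtop.eventually_ge_atTop s).exists
      obtain ⟨m, _, hm1, hm2⟩ := exists_pieceL_fin tx K s h0 hK
      exact ⟨x (tx m), s - tx m, by linarith,
        fun r h1 h2 => hxstep m r (by linarith) (lt_of_lt_of_le h2 hm2)⟩
  have hRμ : Rmap μ = zero4 := by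
    rcases hμ with rfl | rfl <;> decide
  by_contra hcon
  push_neg at hcon
  obtain ⟨s0, hs0⟩ := hcon
  set B : Set ℝ := {s | u s ≠ Rmap (x s)} with hB
  have hBne : B.Nonempty := ⟨s0, hs0⟩
  have hlb : ∀ s ∈ B, min c t0x ≤ s := by
    intro s hs
    by_contra hcs
    push_neg at hcs
    apply hs
    rw [hc s (lt_of_lt_of_le hcs (min_le_left _ _)),
        hinit s (lt_of_lt_of_le hcs (min_le_right _ _)), hRμ]
  have hbdd : BddBelow B := ⟨min c t0x, hlb⟩
  set τ := sInf B with hτ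
  have hτle : ∀ s ∈ B, τ ≤ s := fun s hs => csInf_le hbdd hs
  have hbelow : ∀ s, s < τ → u s = Rmap (x s) := by
    intro s hs
    by_contra hcs
    exact absurd (hτle s hcs) (not_le.mpr hs)
  obtain ⟨xp, ε1, hε1, hxp⟩ := xLL τ
  obtain ⟨up, ⟨ε2, hε2, hup⟩, hrel⟩ := uLL τ
  have hεmin : (0:ℝ) < min ε1 ε2 := lt_min hε1 hε2
  set r := τ - min ε1 ε2 / 2 with hrdef
  have hr1 : r < τ := by simp only [hrdef]; linarith
  have hxr : x r = xp := hxp r (by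
    have := min_le_left ε1 ε2
    simp only [hrdef]; linarith) hr1
  have hur : u r = up := hup r (by
    have := min_le_right ε1 ε2
    simp only [hrdef]; linarith) hr1
  have hupR : up = Rmap xp := by rw [← hxr, ← hur]; exact hbelow r hr1
  have hτeq : x τ = REstep xp up (u τ) := hstep τ xp up ⟨ε1, hε1, hxp⟩ ⟨ε2, hε2, hup⟩
  have hDup : Rmap xp = zero4 ∨ ∃ i, Rmap xp = unit4 i := by
    rw [← hupR, ← hur]; exact uD r
  rw [hupR] at hrel hτeq
  have hkey := keyStep xp (u τ) hDup (uD τ) hrel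
  have hnotB : u τ = Rmap (x τ) := by rw [hτeq]; exact hkey.symm
  obtain ⟨δ1, hδ1, hδu⟩ := uRC τ
  obtain ⟨δ2, hδ2, hδx⟩ := xRC τ
  have hδmin : (0:ℝ) < min δ1 δ2 := lt_min hδ1 hδ2
  have hlb2 : ∀ s ∈ B, τ + min δ1 δ2 ≤ s := by
    intro s hs
    by_contra hcs
    push_neg at hcs
    have hsτ : τ ≤ s := hτle s hs
    apply hs
    rw [hδu s hsτ (by have := min_le_left δ1 δ2; linarith),
        hδx s hsτ (by have := min_le_right δ1 δ2; linarith)]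
    exact hnotB
  have hfin : τ + min δ1 δ2 ≤ τ := le_csInf hBne hlb2
  linarith

theorem stmt18 (u u' : ℝ → (Fin 4 → Bool)) (hu : u ∈ Uset) (hu' : u' ∈ Uset)
    (hne : u ≠ u') (μ μ' : Fin 5 → Bool) (hμ : μ ∈ Theta0) (hμ' : μ' ∈ Theta0)
    (x x' : ℝ → (Fin 5 → Bool)) (hx : Solves u μ x) (hx' : Solves u' μ' x') :
    x ≠ x' := by
  intro heq
  apply hne
  have A := recover u μ x (good_of_mem u hu) hμ hx
  have A' := recover u' μ' x' (good_of_mem u' hu') hμ' hx'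
  funext s
  rw [A s, A' s, heq]
end

section
/- Closure of outputs under admissibility: for every μ ∈ Θ₀ and every u ∈ U, writing f_μ(u) = (x₀, x₁, x₂, x₃, x₄), the output tuple (x₁, x₂, x₃, x₄) is itself an admissible input, i.e., (x₁,x₂,x₃,x₄) ∈ U; hence f_μ(u) ∈ S^(1) × U. -/
open Filter

def mkb (b : Bool) : Fin 5 → Bool := fun j => b && decide (j = 0)

lemma zfix : ∀ X : Fin 5 → Bool, REstep X zero4 zero4 = X := by decide

set_option maxHeartbeats 4000000 in
lemma idemU : ∀ (X : Fin 5 → Bool) (up : Fin 4 → Bool) (i : Fin 4),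
    REstep (REstep X up (unit4 i)) (unit4 i) (unit4 i) = REstep X up (unit4 i) := by decide

lemma L1 : ∀ (b : Bool) (l : Fin 4 → Bool), REstep (mkb b) zero4 l = Phi (mkb b) l := by decide

lemma L3z : ∀ b, REstep (Phi (mkb b) zero4) zero4 zero4 = mkb (Phi (mkb b) zero4 0) := by decide

lemma L3u : ∀ b i, REstep (Phi (mkb b) (unit4 i)) (unit4 i) zero4
    = mkb (Phi (mkb b) (unit4 i) 0) := by decide

lemma mkb_tail : ∀ b (i : Fin 4), mkb b i.succ = false := by decide

lemma tailDz : ∀ b, (fun i : Fin 4 => Phi (mkb b) zero4 i.succ) = zero4 := by decide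

lemma tailDu : ∀ b j, ((fun i : Fin 4 => Phi (mkb b) (unit4 j) i.succ) = zero4 ∨
    ∃ i', (fun i : Fin 4 => Phi (mkb b) (unit4 j) i.succ) = unit4 i') := by decide

lemma mu_eq (μ : Fin 5 → Bool) (hμ : μ ∈ Theta0) : μ = mkb (μ 0) := by
  rcases hμ with h | h <;> subst h <;> decide
section Grid
variable {T : ℕ → ℝ}

lemma grid_ex (hT : Monotone T) (hTt : Tendsto T atTop atTop) (s : ℝ) :
    ∃ n, s < T (n + 1) := by
  obtain ⟨n, hn⟩ := (hTt.eventually (eventually_gt_atTop s)).exists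
  exact ⟨n, hn.trans_le (hT (Nat.le_succ n))⟩

lemma grid_pos (hT : Monotone T) (hTt : Tendsto T atTop atTop) {a : ℝ} (h : ¬ a < T 0) :
    ∃ n, T n ≤ a ∧ a < T (n + 1) := by
  refine ⟨Nat.find (grid_ex hT hTt a), ?_, Nat.find_spec (grid_ex hT hTt a)⟩
  rcases hn : Nat.find (grid_ex hT hTt a) with _ | m
  · exact not_lt.1 h
  · exact not_lt.1 (Nat.find_min (grid_ex hT hTt a) (hn ▸ Nat.lt_succ_self m))

lemma grid_posL (hT : Monotone T) (hTt : Tendsto T atTop atTop) {a : ℝ} (h : ¬ a ≤ T 0) :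
    ∃ n, T n < a ∧ a ≤ T (n + 1) := by
  have hex : ∃ n, a ≤ T (n + 1) := by
    obtain ⟨n, hn⟩ := grid_ex hT hTt a
    exact ⟨n, hn.le⟩
  refine ⟨Nat.find hex, ?_, Nat.find_spec hex⟩
  rcases hn : Nat.find hex with _ | m
  · exact not_le.1 h
  · exact not_le.1 (Nat.find_min hex (hn ▸ Nat.lt_succ_self m))

lemma grid_dis (hT : StrictMono T) {m n : ℕ} {s : ℝ} (h1 : T m ≤ s) (h2 : s < T (m + 1))
    (h3 : T n ≤ s) (h4 : s < T (n + 1)) : m = n := by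
  rcases lt_trichotomy m n with h | h | h
  · exact absurd ((hT.monotone (Nat.succ_le_of_lt h)).trans h3) (not_le.2 h2)
  · exact h
  · exact absurd ((hT.monotone (Nat.succ_le_of_lt h)).trans h1) (not_le.2 h4)

end Grid

lemma isLeftLim_unique {α : Type*} {y : ℝ → α} {a : ℝ} {v w : α}
    (h1 : IsLeftLim y a v) (h2 : IsLeftLim y a w) : v = w := by
  obtain ⟨e1, he1, h1⟩ := h1
  obtain ⟨e2, he2, h2⟩ := h2
  have hm : 0 < min e1 e2 := lt_min he1 he2
  have hs1 : a - e1 < a - min e1 e2 / 2 := by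
    have := min_le_left e1 e2; linarith
  have hs2 : a - e2 < a - min e1 e2 / 2 := by
    have := min_le_right e1 e2; linarith
  have hsa : a - min e1 e2 / 2 < a := by linarith
  rw [← h1 _ hs1 hsa, ← h2 _ hs2 hsa]

/-- left limits and local constancy for piecewise-constant functions on a grid -/
lemma grid_ll {α : Type*} {T : ℕ → ℝ} (hT : StrictMono T) {y : ℝ → α} {c : α} {W : ℕ → α}
    (hc : ∀ s < T 0, y s = c) (hW : ∀ n s, T n ≤ s → s < T (n + 1) → y s = W n) :
    (∀ a ≤ T 0, IsLeftLim y a c) ∧ (∀ n a, T n < a → a ≤ T (n + 1) → IsLeftLim y a (W n)) := by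
  constructor
  · intro a ha
    exact ⟨1, one_pos, fun s _ hs => hc s (hs.trans_le ha)⟩
  · intro n a h1 h2
    exact ⟨a - T n, sub_pos.2 h1, fun s hs1 hs2 =>
      hW n s (by linarith) (hs2.trans_le h2)⟩

lemma sig_rlc {α : Type*} {x : ℝ → α} (h : IsSignal x) :
    ∀ s : ℝ, ∃ δ > (0:ℝ), ∀ r, s ≤ r → r < s + δ → x r = x s := by
  obtain ⟨t, ht, htt, hpre, hstep⟩ := h
  intro s
  by_cases h0 : s < t 0
  · exact ⟨t 0 - s, by linarith, fun r hr1 hr2 => hpre r s (by linarith) h0⟩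
  · obtain ⟨n, hn1, hn2⟩ := grid_pos ht.monotone htt h0
    refine ⟨t (n+1) - s, by linarith, fun r hr1 hr2 => ?_⟩
    rw [hstep n r (hn1.trans hr1) (by linarith), hstep n s hn1 hn2]

lemma sig_ll {α : Type*} {x : ℝ → α} (h : IsSignal x) :
    ∀ a : ℝ, ∃ w, IsLeftLim x a w := by
  obtain ⟨t, ht, htt, hpre, hstep⟩ := h
  intro a
  by_cases h0 : a ≤ t 0
  · exact ⟨x (a - 1), 1, one_pos, fun s hs1 hs2 =>
      hpre s (a-1) (by linarith) (by linarith)⟩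
  · obtain ⟨n, hn1, hn2⟩ := grid_posL ht.monotone htt h0
    exact ⟨x (t n), a - t n, sub_pos.2 hn1, fun s hs1 hs2 =>
      hstep n s (by linarith) (by linarith)⟩

lemma uniq (u : ℝ → Fin 4 → Bool) (μ : Fin 5 → Bool) (x F : ℝ → Fin 5 → Bool)
    (hx : Solves u μ x)
    (m : ℝ) (hlow : ∀ s < m, x s = F s)
    (hFr : ∀ s : ℝ, ∃ δ > (0:ℝ), ∀ r, s ≤ r → r < s + δ → F r = F s)
    (hFl : ∀ a : ℝ, ∃ w, IsLeftLim F a w)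
    (hul : ∀ a : ℝ, ∃ w, IsLeftLim u a w)
    (hFstep : ∀ a xp up, IsLeftLim F a xp → IsLeftLim u a up → F a = REstep xp up (u a)) :
    ∀ s, x s = F s := by
  by_contra hcon
  push_neg at hcon
  set A := {s : ℝ | x s ≠ F s} with hA
  have hne : A.Nonempty := hcon
  have hbdd : BddBelow A := ⟨m, fun s hs => le_of_not_gt fun hlt => hs (hlow s hlt)⟩
  set a := sInf A with ha'
  have hbelow : ∀ s < a, x s = F s := by
    intro s hs
    by_contra hne'
    exact absurd (csInf_le hbdd hne') (not_le.2 hs)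
  have haA : a ∈ A := by
    by_contra hnot
    have hxa : x a = F a := not_not.1 hnot
    obtain ⟨δ1, hδ1, h1⟩ := sig_rlc hx.1 a
    obtain ⟨δ2, hδ2, h2⟩ := hFr a
    have hlb : a + min δ1 δ2 ≤ a := by
      refine le_csInf hne fun s hs => ?_
      by_contra hlt
      push_neg at hlt
      rcases lt_or_ge s a with h' | h'
      · exact hs (hbelow s h')
      · have hx' : x s = x a := h1 s h' (hlt.trans_le (by
          have := min_le_left δ1 δ2; linarith))
        have hF' : F s = F a := h2 s h' (hlt.trans_le (by
          have := min_le_right δ1 δ2; linarith))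
        exact hs (by rw [hx', hF', hxa])
    have : (0:ℝ) < min δ1 δ2 := lt_min hδ1 hδ2
    linarith
  obtain ⟨xp, hxp⟩ := sig_ll hx.1 a
  obtain ⟨up, hup⟩ := hul a
  obtain ⟨Fp, hFp⟩ := hFl a
  have hxFp : xp = Fp := by
    obtain ⟨e1, he1, h1⟩ := hxp
    obtain ⟨e2, he2, h2⟩ := hFp
    have hm : 0 < min e1 e2 := lt_min he1 he2
    have hs1 : a - e1 < a - min e1 e2 / 2 := by have := min_le_left e1 e2; linarith
    have hs2 : a - e2 < a - min e1 e2 / 2 := by have := min_le_right e1 e2; linarith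
    have hsa : a - min e1 e2 / 2 < a := by linarith
    rw [← h1 _ hs1 hsa, ← h2 _ hs2 hsa]
    exact hbelow _ hsa
  have hstep := hx.2.2 a xp up hxp hup
  have hF := hFstep a Fp up hFp hup
  exact haA (by rw [hstep, hxFp, ← hF])

lemma idemD (X : Fin 5 → Bool) (up l : Fin 4 → Bool) (hl : l ∈ Dset) :
    REstep (REstep X up l) l l = REstep X up l := by
  rcases hl with h | ⟨i, h⟩
  · subst h; rw [zfix]
  · subst h; exact idemU X up i

/-- the state sequence of the explicit solution -/
def Sseq (μ : Fin 5 → Bool) (v : ℕ → (Fin 4 → Bool)) : ℕ → (Fin 5 → Bool)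
  | 0 => REstep μ zero4 (v 0)
  | n+1 => REstep (Sseq μ v n) (v n) (v (n+1))

lemma Sseq_fix (μ : Fin 5 → Bool) (v : ℕ → (Fin 4 → Bool)) (hv : ∀ n, v n ∈ Dset) (n : ℕ) :
    REstep (Sseq μ v n) (v n) (v n) = Sseq μ v n := by
  cases n with
  | zero => exact idemD μ zero4 (v 0) (hv 0)
  | succ n => exact idemD (Sseq μ v n) (v n) (v (n+1)) (hv (n+1))

lemma core {T : ℕ → ℝ} (hT : StrictMono T) (hTt : Tendsto T atTop atTop)
    (v : ℕ → Fin 4 → Bool) (hv : ∀ n, v n ∈ Dset)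
    (u : ℝ → Fin 4 → Bool)
    (hu0 : ∀ s < T 0, u s = zero4)
    (huI : ∀ n s, T n ≤ s → s < T (n+1) → u s = v n)
    (μ : Fin 5 → Bool) (x : ℝ → Fin 5 → Bool) (hx : Solves u μ x) :
    (∀ s < T 0, x s = μ) ∧ (∀ n s, T n ≤ s → s < T (n+1) → x s = Sseq μ v n) := by
  classical
  set F : ℝ → Fin 5 → Bool := fun s =>
    if h : s < T 0 then μ else Sseq μ v (Nat.find (grid_ex hT.monotone hTt s)) with hF
  have Feval0 : ∀ s < T 0, F s = μ := fun s hs => by simp only [hF, dif_pos hs]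
  have FevalI : ∀ n s, T n ≤ s → s < T (n+1) → F s = Sseq μ v n := by
    intro n s h1 h2
    have h0 : ¬ s < T 0 := not_lt.2 ((hT.monotone (Nat.zero_le n)).trans h1)
    have hn2 : s < T (Nat.find (grid_ex hT.monotone hTt s) + 1) :=
      Nat.find_spec (grid_ex hT.monotone hTt s)
    have hn1 : T (Nat.find (grid_ex hT.monotone hTt s)) ≤ s := by
      rcases hn : Nat.find (grid_ex hT.monotone hTt s) with _ | m
      · exact not_lt.1 h0
      · exact not_lt.1 (Nat.find_min (grid_ex hT.monotone hTt s) (hn ▸ Nat.lt_succ_self m))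
    have heq : Nat.find (grid_ex hT.monotone hTt s) = n := grid_dis hT hn1 hn2 h1 h2
    simp only [hF, dif_neg h0, heq]
  have hmain : ∀ s, x s = F s := by
    obtain ⟨t0, ht0⟩ := hx.2.1
    apply uniq u μ x F hx (min t0 (T 0))
    · intro s hs
      rw [ht0 s (hs.trans_le (min_le_left _ _)), Feval0 s (hs.trans_le (min_le_right _ _))]
    · -- right local constancy of F
      intro s
      by_cases h0 : s < T 0
      · exact ⟨T 0 - s, by linarith, fun r hr1 hr2 =>
          by rw [Feval0 r (by linarith), Feval0 s h0]⟩
      · obtain ⟨n, hn1, hn2⟩ := grid_pos hT.monotone hTt h0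
        exact ⟨T (n+1) - s, by linarith, fun r hr1 hr2 =>
          by rw [FevalI n r (hn1.trans hr1) (by linarith), FevalI n s hn1 hn2]⟩
    · -- left limits of F
      intro a
      by_cases h0 : a ≤ T 0
      · exact ⟨μ, (grid_ll hT Feval0 FevalI).1 a h0⟩
      · obtain ⟨n, hn1, hn2⟩ := grid_posL hT.monotone hTt h0
        exact ⟨Sseq μ v n, (grid_ll hT Feval0 FevalI).2 n a hn1 hn2⟩
    · -- left limits of u
      intro a
      by_cases h0 : a ≤ T 0
      · exact ⟨zero4, (grid_ll hT hu0 huI).1 a h0⟩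
      · obtain ⟨n, hn1, hn2⟩ := grid_posL hT.monotone hTt h0
        exact ⟨v n, (grid_ll hT hu0 huI).2 n a hn1 hn2⟩
    · -- F solves
      intro a xp up hxp hup
      by_cases h0 : a ≤ T 0
      · have hxp' : xp = μ := isLeftLim_unique hxp ((grid_ll hT Feval0 FevalI).1 a h0)
        have hup' : up = zero4 := isLeftLim_unique hup ((grid_ll hT hu0 huI).1 a h0)
        rcases lt_or_eq_of_le h0 with h1 | h1
        · rw [Feval0 a h1, hu0 a h1, hxp', hup', zfix]
        · have ha1 : a < T 1 := h1.le.trans_lt (hT (Nat.lt_succ_self 0))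
          rw [FevalI 0 a h1.ge ha1, huI 0 a h1.ge ha1, hxp', hup']
          rfl
      · obtain ⟨n, hn1, hn2⟩ := grid_posL hT.monotone hTt h0
        have hxp' : xp = Sseq μ v n :=
          isLeftLim_unique hxp ((grid_ll hT Feval0 FevalI).2 n a hn1 hn2)
        have hup' : up = v n := isLeftLim_unique hup ((grid_ll hT hu0 huI).2 n a hn1 hn2)
        rcases lt_or_eq_of_le hn2 with h1 | h1
        · rw [FevalI n a hn1.le h1, huI n a hn1.le h1, hxp', hup', Sseq_fix μ v hv n]
        · have ha2 : a < T (n+2) := h1 ▸ hT (Nat.lt_succ_self (n+1))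
          rw [FevalI (n+1) a h1.ge ha2, huI (n+1) a h1.ge ha2, hxp', hup']
          rfl
  exact ⟨fun s hs => (hmain s).trans (Feval0 s hs),
         fun n s h1 h2 => (hmain s).trans (FevalI n s h1 h2)⟩

lemma L3D (b : Bool) (l : Fin 4 → Bool) (hl : l ∈ Dset) :
    REstep (Phi (mkb b) l) l zero4 = mkb (Phi (mkb b) l 0) := by
  rcases hl with h | ⟨i, h⟩
  · subst h; exact L3z b
  · subst h; exact L3u b i

lemma tailD (b : Bool) (l : Fin 4 → Bool) (hl : l ∈ Dset) :
    (fun i : Fin 4 => Phi (mkb b) l i.succ) ∈ Dset := by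
  rcases hl with h | ⟨i, h⟩
  · subst h; exact Or.inl (tailDz b)
  · subst h; exact tailDu b i

lemma mu_tail (μ : Fin 5 → Bool) (hμ : μ ∈ Theta0) (i : Fin 4) : μ i.succ = false := by
  rw [mu_eq μ hμ]; exact mkb_tail (μ 0) i

/-- the parity (mode) sequence -/
def bseq (b0 : Bool) (lam : ℕ → Fin 4 → Bool) : ℕ → Bool
  | 0 => b0
  | j+1 => Phi (mkb (bseq b0 lam j)) (lam j) 0

lemma NFgen (b0 : Bool) (lam : ℕ → Fin 4 → Bool) (hlam : ∀ j, lam j ∈ Dset)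
    (v : ℕ → Fin 4 → Bool) (hve : ∀ j, v (2*j) = lam j) (hvo : ∀ j, v (2*j+1) = zero4) :
    ∀ j, Sseq (mkb b0) v (2*j) = Phi (mkb (bseq b0 lam j)) (lam j) ∧
         Sseq (mkb b0) v (2*j+1) = mkb (bseq b0 lam (j+1)) := by
  intro j
  induction j with
  | zero =>
    have h0 : Sseq (mkb b0) v (2*0) = Phi (mkb (bseq b0 lam 0)) (lam 0) := by
      show REstep (mkb b0) zero4 (v 0) = _
      rw [show v 0 = lam 0 from hve 0, L1]
      rfl
    refine ⟨h0, ?_⟩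
    show REstep (Sseq (mkb b0) v 0) (v 0) (v 1) = _
    rw [show Sseq (mkb b0) v 0 = Sseq (mkb b0) v (2*0) from rfl, h0,
      show v 0 = lam 0 from hve 0, show v 1 = zero4 from hvo 0, L3D _ _ (hlam 0)]
    rfl
  | succ j ih =>
    have h0 : Sseq (mkb b0) v (2*(j+1)) = Phi (mkb (bseq b0 lam (j+1))) (lam (j+1)) := by
      rw [show 2*(j+1) = (2*j+1)+1 by ring]
      show REstep (Sseq (mkb b0) v (2*j+1)) (v (2*j+1)) (v (2*j+1+1)) = _
      rw [ih.2, hvo j, show (2*j+1+1) = 2*(j+1) by ring, hve (j+1), L1]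
    refine ⟨h0, ?_⟩
    show REstep (Sseq (mkb b0) v (2*(j+1))) (v (2*(j+1))) (v (2*(j+1)+1)) = _
    rw [h0, hve (j+1), hvo (j+1), L3D _ _ (hlam (j+1))]
    rfl


lemma NFfin (k : ℕ) (b0 : Bool) (lam : ℕ → Fin 4 → Bool) (hlam : ∀ j, j ≤ k → lam j ∈ Dset)
    (v : ℕ → Fin 4 → Bool) (hve : ∀ j, j ≤ k → v (2*j) = lam j)
    (hvo : ∀ j, 2*j+1 < 2*k → v (2*j+1) = zero4) :
    ∀ j, j ≤ k → Sseq (mkb b0) v (2*j) = Phi (mkb (bseq b0 lam j)) (lam j) ∧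
      (2*j+1 < 2*k → Sseq (mkb b0) v (2*j+1) = mkb (bseq b0 lam (j+1))) := by
  intro j
  induction j with
  | zero =>
    intro hj
    have h0 : Sseq (mkb b0) v (2*0) = Phi (mkb (bseq b0 lam 0)) (lam 0) := by
      show REstep (mkb b0) zero4 (v 0) = _
      rw [show v 0 = lam 0 from hve 0 hj, L1]
      rfl
    refine ⟨h0, fun hlt => ?_⟩
    show REstep (Sseq (mkb b0) v 0) (v 0) (v 1) = _
    rw [show Sseq (mkb b0) v 0 = Sseq (mkb b0) v (2*0) from rfl, h0,
      show v 0 = lam 0 from hve 0 hj, show v 1 = zero4 from hvo 0 hlt, L3D _ _ (hlam 0 hj)]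
    rfl
  | succ j ih =>
    intro hj
    have hjk : j ≤ k := by omega
    have hodd : 2*j+1 < 2*k := by omega
    have h0 : Sseq (mkb b0) v (2*(j+1)) = Phi (mkb (bseq b0 lam (j+1))) (lam (j+1)) := by
      rw [show 2*(j+1) = (2*j+1)+1 by ring]
      show REstep (Sseq (mkb b0) v (2*j+1)) (v (2*j+1)) (v (2*j+1+1)) = _
      rw [(ih hjk).2 hodd, hvo j hodd, show (2*j+1+1) = 2*(j+1) by ring, hve (j+1) hj, L1]
    refine ⟨h0, fun hlt => ?_⟩
    show REstep (Sseq (mkb b0) v (2*(j+1))) (v (2*(j+1))) (v (2*(j+1)+1)) = _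
    rw [h0, hve (j+1) hj, hvo (j+1) hlt, L3D _ _ (hlam (j+1) hj)]
    rfl

theorem stmt19 (μ : Fin 5 → Bool) (hμ : μ ∈ Theta0)
    (u : ℝ → (Fin 4 → Bool)) (hu : u ∈ Uset)
    (x : ℝ → (Fin 5 → Bool)) (hx : Solves u μ x) :
    (fun (s : ℝ) (i : Fin 4) => x s i.succ) ∈ Uset := by
  rcases hu with ⟨k, t, htk, lam, hlam, hiff⟩ | ⟨t, ht, htt, lam, hlam, hiff⟩
  · -- finite branch
    have tmole : ∀ a b : ℕ, a ≤ b → b ≤ 2*k → t a ≤ t b := by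
      intro a b hab hb
      rcases eq_or_lt_of_le hab with rfl | h
      · exact le_rfl
      · exact (htk a b h hb).le
    set T : ℕ → ℝ := fun n => if n ≤ 2*k then t n else t (2*k) + ((n - 2*k : ℕ) : ℝ) with hT'
    have hTeq : ∀ n, n ≤ 2*k → T n = t n := fun n hn => by simp only [hT', if_pos hn]
    have hTgt : ∀ n, ¬ n ≤ 2*k → T n = t (2*k) + ((n - 2*k : ℕ) : ℝ) :=
      fun n hn => by simp only [hT', if_neg hn]
    have hT : StrictMono T := by
      intro a b hab
      by_cases hb : b ≤ 2*k
      · rw [hTeq a (by omega), hTeq b hb]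
        exact htk a b hab hb
      · rw [hTgt b hb]
        by_cases ha : a ≤ 2*k
        · rw [hTeq a ha]
          have h1 : t a ≤ t (2*k) := tmole a (2*k) ha le_rfl
          have h2 : (1:ℝ) ≤ ((b - 2*k : ℕ) : ℝ) := by
            have : (1:ℕ) ≤ b - 2*k := by omega
            exact_mod_cast this
          linarith
        · rw [hTgt a ha]
          have : ((a - 2*k : ℕ) : ℝ) < ((b - 2*k : ℕ) : ℝ) := by
            have : a - 2*k < b - 2*k := by omega
            exact_mod_cast this
          linarith
    have hTt : Tendsto T atTop atTop := by
      rw [tendsto_atTop_atTop]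
      intro c
      refine ⟨2*k + 1 + ⌈max 0 (c - t (2*k))⌉₊, fun n hn => ?_⟩
      have h1 : ¬ n ≤ 2*k := by omega
      have h3 : max 0 (c - t (2*k)) ≤ (⌈max 0 (c - t (2*k))⌉₊ : ℝ) := Nat.le_ceil _
      have h4 : ((⌈max 0 (c - t (2*k))⌉₊ : ℕ) : ℝ) ≤ ((n - 2*k : ℕ) : ℝ) :=
        Nat.cast_le.2 (by omega)
      have h5 : c - t (2*k) ≤ max 0 (c - t (2*k)) := le_max_right _ _
      rw [hTgt n h1]
      linarith
    set v : ℕ → Fin 4 → Bool :=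
      fun n => if n < 2*k then (if n % 2 = 0 then lam (n/2) else zero4) else lam k with hv'
    have hve : ∀ j, j ≤ k → v (2*j) = lam j := by
      intro j hj
      by_cases h : 2*j < 2*k
      · have h1 : (2*j) % 2 = 0 := by omega
        have h2 : 2*j/2 = j := by omega
        simp only [hv', if_pos h, if_pos h1, h2]
      · have hjk : j = k := by omega
        subst hjk
        simp only [hv', if_neg (lt_irrefl (2*j))]
    have hvo : ∀ j, 2*j+1 < 2*k → v (2*j+1) = zero4 := by
      intro j hj
      have h1 : ¬ (2*j+1) % 2 = 0 := by omega
      simp only [hv', if_pos hj, if_neg h1]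
    have hvk : ∀ n, 2*k ≤ n → v n = lam k := by
      intro n hn
      by_cases h : n < 2*k
      · omega
      · simp only [hv', if_neg h]
    have hv : ∀ n, v n ∈ Dset := by
      intro n
      by_cases h : n < 2*k
      · by_cases h2 : n % 2 = 0
        · simp only [hv', if_pos h, if_pos h2]
          exact hlam _ (by omega)
        · simp only [hv', if_pos h, if_neg h2]
          exact Or.inl rfl
      · simp only [hv', if_neg h]
        exact hlam k le_rfl
    -- uniqueness of the pulse index
    have hidx : ∀ (s : ℝ) (j' : ℕ), j' ≤ k → t (2*j') ≤ s →
        (j' < k → s < t (2*j'+1)) → ∀ (j : ℕ), j < k → t (2*j) ≤ s → s < t (2*j+1) → j' = j := by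
      intro s j' hj'k hle' hcond' j hjk h1 h2
      rcases lt_trichotomy j' j with h | h | h
      · have : s < t (2*j'+1) := hcond' (by omega)
        have h3 : t (2*j'+1) ≤ t (2*j) := tmole _ _ (by omega) (by omega)
        linarith
      · exact h
      · have h3 : t (2*j+1) ≤ t (2*j') := tmole _ _ (by omega) (by omega)
        linarith
    have hu0 : ∀ s, s < T 0 → u s = zero4 := by
      intro s hs
      rw [hTeq 0 (by omega)] at hs
      funext i
      cases hb : u s i with
      | false => rfl
      | true =>
        obtain ⟨j, hjk, hval, hle, hcond⟩ := (hiff s i).1 hb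
        have : t 0 ≤ t (2*j) := tmole 0 (2*j) (by omega) (by omega)
        exact absurd hle (by linarith)
    have huI : ∀ n s, T n ≤ s → s < T (n+1) → u s = v n := by
      intro n s h1 h2
      by_cases hnk : n < 2*k
      · rw [hTeq n (by omega)] at h1
        rw [hTeq (n+1) (by omega)] at h2
        rcases Nat.even_or_odd n with ⟨j, hj⟩ | ⟨j, hj⟩
        · have e : n = 2*j := by omega
          subst e
          have hjk : j < k := by omega
          rw [hve j (by omega)]
          funext i
          cases hli : lam j i with
          | true => exact (hiff s i).2 ⟨j, by omega, hli, h1, fun _ => h2⟩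
          | false =>
            cases hb : u s i with
            | false => rfl
            | true =>
              obtain ⟨j', hj'k, hval, hle', hcond'⟩ := (hiff s i).1 hb
              have := hidx s j' hj'k hle' hcond' j hjk h1 h2
              rw [this, hli] at hval
              exact hval.symm
        · have e : n = 2*j+1 := by omega
          subst e
          rw [hvo j (by omega)]
          funext i
          cases hb : u s i with
          | false => rfl
          | true =>
            obtain ⟨j', hj'k, hval, hle', hcond'⟩ := (hiff s i).1 hb
            rcases Nat.lt_or_ge j' (j+1) with h | h
            · have hj'lt : j' < k := by omega
              have h3 : t (2*j'+1) ≤ t (2*j+1) := tmole _ _ (by omega) (by omega)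
              have := hcond' hj'lt
              linarith
            · have h3 : t (2*j+1+1) ≤ t (2*j') := tmole _ _ (by omega) (by omega)
              linarith
      · rw [hvk n (by omega)]
        have hsk : t (2*k) ≤ s := by
          have := hT.monotone (show 2*k ≤ n by omega)
          rw [hTeq (2*k) le_rfl] at this
          linarith
        funext i
        cases hli : lam k i with
        | true => exact (hiff s i).2 ⟨k, le_rfl, hli, hsk, fun h => absurd h (lt_irrefl k)⟩
        | false =>
          cases hb : u s i with
          | false => rfl
          | true =>
            obtain ⟨j', hj'k, hval, hle', hcond'⟩ := (hiff s i).1 hb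
            rcases Nat.lt_or_ge j' k with h | h
            · have h3 : t (2*j'+1) ≤ t (2*k) := tmole _ _ (by omega) le_rfl
              have := hcond' h
              linarith
            · have : j' = k := by omega
              rw [this, hli] at hval
              exact hval.symm
    obtain ⟨hX0, hXI⟩ := core hT hTt v hv u hu0 huI μ x hx
    have hXI' : ∀ n s, T n ≤ s → s < T (n+1) → x s = Sseq (mkb (μ 0)) v n :=
      fun n s h1 h2 => (hXI n s h1 h2).trans (congrArg (fun w => Sseq w v n) (mu_eq μ hμ))
    have hNFf := NFfin k (μ 0) lam hlam v hve hvo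
    have hSk : ∀ n, 2*k ≤ n → Sseq (mkb (μ 0)) v n = Phi (mkb (bseq (μ 0) lam k)) (lam k) := by
      intro n
      induction n with
      | zero =>
        intro hn
        have hk0 : k = 0 := by omega
        subst hk0
        exact (hNFf 0 le_rfl).1
      | succ n ih =>
        intro hn
        rcases Nat.lt_or_ge n (2*k) with h | h
        · have e : n+1 = 2*k := by omega
          rw [e]
          exact (hNFf k le_rfl).1
        · show REstep (Sseq (mkb (μ 0)) v n) (v n) (v (n+1)) = _
          rw [show v (n+1) = v n from (hvk (n+1) (by omega)).trans (hvk n h).symm]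
          exact (Sseq_fix (mkb (μ 0)) v hv n).trans (ih h)
    refine Or.inl ⟨k, t, htk,
      (fun j => fun i => Phi (mkb (bseq (μ 0) lam j)) (lam j) i.succ),
      fun j hj => tailD _ _ (hlam j hj), ?_⟩
    intro s i
    show x s i.succ = true ↔ _
    by_cases h0 : s < T 0
    · rw [hX0 s h0, mu_tail μ hμ]
      rw [hTeq 0 (by omega)] at h0
      constructor
      · intro h; exact absurd h (by decide)
      · rintro ⟨j, hjk, hval, hle, hcond⟩
        have : t 0 ≤ t (2*j) := tmole 0 (2*j) (by omega) (by omega)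
        exact absurd hle (by linarith)
    · obtain ⟨n, hn1, hn2⟩ := grid_pos hT.monotone hTt h0
      by_cases hnk : n < 2*k
      · rw [hTeq n (by omega)] at hn1
        rw [hTeq (n+1) (by omega)] at hn2
        rcases Nat.even_or_odd n with ⟨j, hj⟩ | ⟨j, hj⟩
        · have e : n = 2*j := by omega
          subst e
          have hjk : j < k := by omega
          have hTn1 : T (2*j) ≤ s := by rw [hTeq (2*j) (by omega)]; exact hn1
          have hTn2 : s < T (2*j+1) := by rw [hTeq (2*j+1) (by omega)]; exact hn2
          rw [hXI' (2*j) s hTn1 hTn2, (hNFf j (by omega)).1]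
          constructor
          · intro h
            exact ⟨j, by omega, h, hn1, fun _ => hn2⟩
          · rintro ⟨j', hj'k, hval, hle', hcond'⟩
            have := hidx s j' hj'k hle' hcond' j hjk hn1 hn2
            rw [← this]
            exact hval
        · have e : n = 2*j+1 := by omega
          subst e
          have hTn1 : T (2*j+1) ≤ s := by rw [hTeq (2*j+1) (by omega)]; exact hn1
          have hTn2 : s < T (2*j+1+1) := by rw [hTeq (2*j+1+1) (by omega)]; exact hn2
          rw [hXI' (2*j+1) s hTn1 hTn2, (hNFf j (by omega)).2 (by omega), mkb_tail]
          constructor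
          · intro h; exact absurd h (by decide)
          · rintro ⟨j', hj'k, hval, hle', hcond'⟩
            rcases Nat.lt_or_ge j' (j+1) with h | h
            · have hj'lt : j' < k := by omega
              have h3 : t (2*j'+1) ≤ t (2*j+1) := tmole _ _ (by omega) (by omega)
              have := hcond' hj'lt
              exact absurd hn1 (by linarith)
            · have h3 : t (2*j+1+1) ≤ t (2*j') := tmole _ _ (by omega) (by omega)
              exact absurd hle' (by linarith)
      · have hsk : t (2*k) ≤ s := by
          have := hT.monotone (show 2*k ≤ n by omega)
          rw [hTeq (2*k) le_rfl] at this
          linarith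
        rw [hXI' n s hn1 hn2, hSk n (by omega)]
        constructor
        · intro h
          exact ⟨k, le_rfl, h, hsk, fun h' => absurd h' (lt_irrefl k)⟩
        · rintro ⟨j', hj'k, hval, hle', hcond'⟩
          rcases Nat.lt_or_ge j' k with h | h
          · have h3 : t (2*j'+1) ≤ t (2*k) := tmole _ _ (by omega) le_rfl
            have := hcond' h
            exact absurd hsk (by linarith)
          · have hj'e : j' = k := by omega
            rw [← hj'e]
            exact hval

  · -- infinite branch
    set v : ℕ → Fin 4 → Bool := fun n => if n % 2 = 0 then lam (n / 2) else zero4 with hv'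
    have hve : ∀ j, v (2*j) = lam j := by
      intro j
      have h1 : (2*j) % 2 = 0 := by omega
      have h2 : 2*j/2 = j := by omega
      simp [hv', h1, h2]
    have hvo : ∀ j, v (2*j+1) = zero4 := by
      intro j
      have h1 : (2*j+1) % 2 = 1 := by omega
      simp [hv', h1]
    have hv : ∀ n, v n ∈ Dset := by
      intro n
      by_cases h : n % 2 = 0
      · simp only [hv', if_pos h]; exact hlam _
      · simp only [hv', if_neg h]; exact Or.inl rfl
    have hu0 : ∀ s, s < t 0 → u s = zero4 := by
      intro s hs
      funext i
      cases hb : u s i with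
      | false => rfl
      | true =>
        obtain ⟨j, hji, hle, hlt⟩ := (hiff s i).1 hb
        exact absurd hle (not_le.2 (hs.trans_le (ht.monotone (Nat.zero_le _))))
    have huI : ∀ n s, t n ≤ s → s < t (n+1) → u s = v n := by
      intro n s h1 h2
      rcases Nat.even_or_odd n with ⟨j, hj⟩ | ⟨j, hj⟩
      · have e : n = 2*j := by omega
        subst e
        rw [hve j]
        funext i
        cases hli : lam j i with
        | true => exact (hiff s i).2 ⟨j, hli, h1, h2⟩
        | false =>
          cases hb : u s i with
          | false => rfl
          | true =>
            obtain ⟨j', hj'v, hle', hlt'⟩ := (hiff s i).1 hb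
            have : 2*j' = 2*j := grid_dis ht hle' hlt' h1 h2
            have hjj : j' = j := by omega
            rw [hjj, hli] at hj'v
            exact hj'v.symm
      · have e : n = 2*j+1 := by omega
        subst e
        rw [hvo j]
        funext i
        cases hb : u s i with
        | false => rfl
        | true =>
          obtain ⟨j', hj'v, hle', hlt'⟩ := (hiff s i).1 hb
          have : 2*j' = 2*j+1 := grid_dis ht hle' hlt' h1 h2
          omega
    obtain ⟨hX0, hXI⟩ := core ht htt v hv u hu0 huI μ x hx
    have hXI' : ∀ n s, t n ≤ s → s < t (n+1) → x s = Sseq (mkb (μ 0)) v n :=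
      fun n s h1 h2 => (hXI n s h1 h2).trans (congrArg (fun w => Sseq w v n) (mu_eq μ hμ))
    have hNF := NFgen (μ 0) lam hlam v hve hvo
    refine Or.inr ⟨t, ht, htt,
      (fun j => fun i => Phi (mkb (bseq (μ 0) lam j)) (lam j) i.succ),
      fun j => tailD _ _ (hlam j), ?_⟩
    intro s i
    show x s i.succ = true ↔ _
    by_cases h0 : s < t 0
    · rw [hX0 s h0, mu_tail μ hμ]
      constructor
      · intro h; exact absurd h (by decide)
      · rintro ⟨j, hj, hle, hlt⟩
        exact absurd hle (not_le.2 (h0.trans_le (ht.monotone (Nat.zero_le _))))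
    · obtain ⟨n, hn1, hn2⟩ := grid_pos ht.monotone htt h0
      rcases Nat.even_or_odd n with ⟨j, hj⟩ | ⟨j, hj⟩
      · have e : n = 2*j := by omega
        subst e
        rw [hXI' _ s hn1 hn2, (hNF j).1]
        constructor
        · intro h; exact ⟨j, h, hn1, hn2⟩
        · rintro ⟨j', hj', hle', hlt'⟩
          have : 2*j' = 2*j := grid_dis ht hle' hlt' hn1 hn2
          have hjj : j' = j := by omega
          rw [← hjj]
          exact hj'
      · have e : n = 2*j+1 := by omega
        subst e
        rw [hXI' _ s hn1 hn2, (hNF j).2, mkb_tail]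
        constructor
        · intro h; exact absurd h (by decide)
        · rintro ⟨j', hj', hle', hlt'⟩
          exact absurd (grid_dis ht hle' hlt' hn1 hn2) (by omega)
end
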